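/- arXiv:2110.06453 — 8 statements merged into one kernel-verified Lean document; each statement's English description precedes it below -/
import Mathlib

section
/- Let G be a finite group acting freely via Lipschitz maps on a compact metric space M. Then the minimum size of an open G-cover of M equals the minimum size of a closed G-cover of M. -/
/-- The open G-covering number (⊤ if no finite open G-cover exists). -/
noncomputable def covGOpen (G : Type*) [Group G] (M : Type*) [TopologicalSpace M]
    [MulAction G M] : ℕ∞ :=
  sInf ((fun n : ℕ => (n : ℕ∞)) '' {n : ℕ | ∃ U : Fin n → Set M,
    (∀ i, IsOpen (U i)) ∧ (⋃ i, U i) = Set.univ ∧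
    ∀ i, ∀ g : G, g ≠ 1 → Disjoint (U i) ((fun x => g • x) '' U i)})

/-- The closed G-covering number (⊤ if no finite closed G-cover exists). -/
noncomputable def covGClosed (G : Type*) [Group G] (M : Type*) [TopologicalSpace M]
    [MulAction G M] : ℕ∞ :=
  sInf ((fun n : ℕ => (n : ℕ∞)) '' {n : ℕ | ∃ F : Fin n → Set M,
    (∀ i, IsClosed (F i)) ∧ (⋃ i, F i) = Set.univ ∧
    ∀ i, ∀ g : G, g ≠ 1 → Disjoint (F i) ((fun x => g • x) '' F i)})

open Metric Set

/-- For a finite group acting freely via Lipschitz maps on a compact metric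
space, the minimum size of an open G-cover equals the minimum size of a
closed G-cover. -/
theorem covGOpen_eq_covGClosed {G M : Type*} [Group G] [Fintype G]
    [MetricSpace M] [CompactSpace M] [MulAction G M]
    (hfree : ∀ g : G, g ≠ 1 → ∀ x : M, g • x ≠ x)
    (hLip : ∀ g : G, ∃ L : NNReal, LipschitzWith L (fun x : M => g • x)) :
    covGOpen G M = covGClosed G M := by
  classical
  have hset : {n : ℕ | ∃ U : Fin n → Set M,
      (∀ i, IsOpen (U i)) ∧ (⋃ i, U i) = Set.univ ∧
      ∀ i, ∀ g : G, g ≠ 1 → Disjoint (U i) ((fun x => g • x) '' U i)} =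
      {n : ℕ | ∃ F : Fin n → Set M,
      (∀ i, IsClosed (F i)) ∧ (⋃ i, F i) = Set.univ ∧
      ∀ i, ∀ g : G, g ≠ 1 → Disjoint (F i) ((fun x => g • x) '' F i)} := by
    ext n
    simp only [Set.mem_setOf_eq]
    constructor
    · rintro ⟨U, hUo, hUc, hUd⟩
      obtain ⟨F, hFU, hFcl, hFsub⟩ := exists_iUnion_eq_closed_subset hUo
        (fun _ => Set.toFinite _) hUc
      exact ⟨F, hFcl, hFU, fun i g hg =>
        (hUd i g hg).mono (hFsub i) (Set.image_mono (hFsub i))⟩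
    · rintro ⟨F, hFcl, hFc, hFd⟩
      choose L hL using hLip
      set L0 : NNReal := Finset.univ.sup L with hL0def
      have hL0g : ∀ g : G, LipschitzWith L0 (fun x : M => g • x) :=
        fun g => (hL g).weaken (Finset.le_sup (Finset.mem_univ g))
      have key : ∀ i : Fin n, ∀ g : G, ∃ δ : ℝ, 0 < δ ∧
          (g ≠ 1 → Disjoint (thickening δ (F i))
            (thickening δ ((fun x => g • x) '' F i))) := by
        intro i g
        by_cases hg : g = 1
        · exact ⟨1, one_pos, fun h => absurd hg h⟩
        · have hcomp : IsCompact (F i) := (hFcl i).isCompact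
          have hcont : Continuous (fun x : M => g • x) := (hL g).continuous
          have hclosed : IsClosed ((fun x => g • x) '' F i) :=
            (hcomp.image hcont).isClosed
          obtain ⟨δ, hδ, hdis⟩ := (hFd i g hg).exists_thickenings hcomp hclosed
          exact ⟨δ, hδ, fun _ => hdis⟩
      choose δ hδpos hδdis using key
      set m : Fin n → ℝ := fun i =>
        Finset.univ.inf' ⟨1, Finset.mem_univ (1 : G)⟩ (δ i) with hmdef
      have hmpos : ∀ i, 0 < m i := fun i =>
        (Finset.lt_inf'_iff _).2 fun g _ => hδpos i g
      have hmle : ∀ i g, m i ≤ δ i g := fun i g =>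
        Finset.inf'_le _ (Finset.mem_univ g)
      set ε : Fin n → ℝ := fun i => m i / ((L0 : ℝ) + 1) with hεdef
      have hden : (0 : ℝ) < (L0 : ℝ) + 1 := by positivity
      have hεpos : ∀ i, 0 < ε i := fun i => div_pos (hmpos i) hden
      have hεm : ∀ i, ε i * ((L0 : ℝ) + 1) = m i := fun i =>
        div_mul_cancel₀ _ hden.ne'
      have hεlem : ∀ i, ε i ≤ m i := fun i =>
        div_le_self (hmpos i).le (by simp)
      refine ⟨fun i => thickening (ε i) (F i), fun i => isOpen_thickening, ?_, ?_⟩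
      · apply Set.eq_univ_of_univ_subset
        rw [← hFc]
        exact Set.iUnion_mono fun i => self_subset_thickening (hεpos i) _
      · intro i g hg
        rw [Set.disjoint_left]
        rintro x hx ⟨y, hy, rfl⟩
        have hdis := hδdis i g hg
        rw [Metric.mem_thickening_iff] at hy
        obtain ⟨z, hz, hyz⟩ := hy
        have h1 : dist (g • y) (g • z) ≤ (L0 : ℝ) * dist y z := (hL0g g).dist_le_mul y z
        have h2 : dist (g • y) (g • z) < m i := by
          calc dist (g • y) (g • z) ≤ (L0 : ℝ) * dist y z := h1
            _ ≤ (L0 : ℝ) * ε i := by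
                exact mul_le_mul_of_nonneg_left hyz.le L0.coe_nonneg
            _ < ((L0 : ℝ) + 1) * ε i := by
                have := hεpos i
                nlinarith
            _ = m i := by rw [mul_comm]; exact hεm i
        have hmem1 : g • y ∈ thickening (δ i g) ((fun x => g • x) '' F i) := by
          rw [Metric.mem_thickening_iff]
          exact ⟨g • z, ⟨z, hz, rfl⟩, lt_of_lt_of_le h2 (hmle i g)⟩
        have hmem2 : g • y ∈ thickening (δ i g) (F i) :=
          thickening_mono (le_trans (hεlem i) (hmle i g)) _ hx
        exact Set.disjoint_left.1 hdis hmem2 hmem1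

  unfold covGOpen covGClosed
  rw [hset]
end

section
/- Let G be a finite group acting freely via Lipschitz maps on a compact metric space M with finite G-covering number k. Then there exists ε₀ > 0 such that for every 0 < ε < ε₀ and every subset X ⊆ M, the chromatic number of the G-Borsuk graph Bor_G(X, ε) is at most k. -/
/-- If the compact metric G-space M (free Lipschitz action of a finite group G)
has a closed G-cover by k sets, then there is ε₀ > 0 such that for every
0 < ε < ε₀ and every X ⊆ M, the G-Borsuk graph Bor_G(X, ε) admits a proper
k-coloring, i.e. its chromatic number is at most k = cov_G(M). -/
theorem chromatic_le_covG {G M : Type*} [Group G] [Fintype G]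
    [MetricSpace M] [CompactSpace M] [MulAction G M]
    (hfree : ∀ g : G, g ≠ 1 → ∀ x : M, g • x ≠ x)
    (hLip : ∀ g : G, ∃ L : NNReal, LipschitzWith L (fun x : M => g • x))
    (k : ℕ) (F : Fin k → Set M)
    (hFcl : ∀ i, IsClosed (F i))
    (hFcov : (⋃ i, F i) = Set.univ)
    (hFdisj : ∀ i, ∀ g : G, g ≠ 1 → Disjoint (F i) ((fun x => g • x) '' F i)) :
    ∃ ε₀ : ℝ, 0 < ε₀ ∧ ∀ ε : ℝ, 0 < ε → ε < ε₀ → ∀ X : Set M,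
      ∃ c : M → Fin k, ∀ x ∈ X, ∀ y ∈ X,
        (∃ g : G, g ≠ 1 ∧ dist x (g • y) ≤ ε) → c x ≠ c y := by
  classical
  have hcont : ∀ g : G, Continuous (fun x : M => g • x) := by
    intro g; obtain ⟨L, hL⟩ := hLip g; exact hL.continuous
  have key : ∀ (i : Fin k) (g : G), g ≠ 1 → ∃ δ : ℝ, 0 < δ ∧
      Disjoint (Metric.cthickening δ (F i))
        (Metric.cthickening δ ((fun x => g • x) '' F i)) := by
    intro i g hg
    have h1 : IsCompact (F i) := (hFcl i).isCompact
    have h2 : IsCompact ((fun x => g • x) '' F i) := h1.image (hcont g)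
    exact (hFdisj i g hg).exists_cthickenings h1 h2.isClosed
  set D : Fin k × G → ℝ := fun p =>
    if h : p.2 ≠ 1 then (key p.1 p.2 h).choose else 1 with hDdef
  have hDpos : ∀ p, 0 < D p := by
    intro p
    by_cases h : p.2 ≠ 1
    · simpa [hDdef, h] using (key p.1 p.2 h).choose_spec.1
    · simp [hDdef, not_not.mp h]
  set T : Finset (Fin k × G) := Finset.univ.filter (fun p => p.2 ≠ 1) with hTdef
  refine ⟨if h : T.Nonempty then T.inf' h D else 1, ?_, ?_⟩
  · split
    · next h => exact (Finset.lt_inf'_iff h).mpr fun p _ => hDpos p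
    · norm_num
  · intro ε hε hεlt X
    have hmem : ∀ x : M, ∃ i, x ∈ F i := fun x =>
      Set.mem_iUnion.mp (hFcov ▸ Set.mem_univ x)
    refine ⟨fun x => (hmem x).choose, ?_⟩
    rintro x hx y hy ⟨g, hg, hdist⟩ heq
    have hxF : x ∈ F ((hmem x).choose) := (hmem x).choose_spec
    have heq' : (hmem x).choose = (hmem y).choose := heq
    have hyF : y ∈ F ((hmem x).choose) := heq' ▸ (hmem y).choose_spec
    set i := (hmem x).choose with hi
    have hT : (i, g) ∈ T := by simp [hTdef, hg]
    have hTne : T.Nonempty := ⟨_, hT⟩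
    have hεD : ε < D (i, g) := by
      have h1 : ε < T.inf' hTne D := by simpa [hTne] using hεlt
      exact lt_of_lt_of_le h1 (Finset.inf'_le D hT)
    have hDval : D (i, g) = (key i g hg).choose := dif_pos hg
    obtain ⟨hδpos, hδdisj⟩ := (key i g hg).choose_spec
    have hx1 : x ∈ Metric.cthickening ((key i g hg).choose) (F i) :=
      Metric.self_subset_cthickening _ hxF
    have hx2 : x ∈ Metric.cthickening ((key i g hg).choose)
        ((fun x => g • x) '' F i) :=
      Metric.mem_cthickening_of_dist_le x (g • y) _ _ ⟨y, hyF, rfl⟩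
        (hdist.trans (hDval ▸ hεD.le))
    exact hδdisj.le_bot ⟨hx1, hx2⟩
end

section
/- Let G be a finite group acting freely via Lipschitz maps on a compact metric space M. There is a constant D > 1 such that: if X ⊆ M is an (ε/D)-net of M (i.e. every point of M is within distance ε/D of some point of X), then cov_G(M) ≤ χ(Bor_G(X, ε)), the chromatic number of the G-Borsuk graph on X with parameter ε. -/
/-- For a finite group G acting freely via Lipschitz maps on a compact metric
space M, there is a constant D > 1 such that whenever X ⊆ M is an (ε/D)-net of
M, every proper k-coloring of the G-Borsuk graph Bor_G(X, ε) yields an open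
G-cover of M by k sets; i.e. cov_G(M) ≤ χ(Bor_G(X, ε)). -/
theorem covG_le_chromatic {G M : Type*} [Group G] [Fintype G]
    [MetricSpace M] [CompactSpace M] [MulAction G M]
    (hfree : ∀ g : G, g ≠ 1 → ∀ x : M, g • x ≠ x)
    (hLip : ∀ g : G, ∃ L : NNReal, LipschitzWith L (fun x : M => g • x)) :
    ∃ D : ℝ, 1 < D ∧ ∀ ε : ℝ, 0 < ε → ∀ X : Set M,
      (∀ x : M, ∃ y ∈ X, dist x y ≤ ε / D) →
      ∀ (k : ℕ) (c : M → Fin k),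
        (∀ x ∈ X, ∀ y ∈ X, (∃ g : G, g ≠ 1 ∧ dist x (g • y) ≤ ε) → c x ≠ c y) →
        ∃ U : Fin k → Set M,
          (∀ i, IsOpen (U i)) ∧ (⋃ i, U i) = Set.univ ∧
          ∀ i, ∀ g : G, g ≠ 1 → Disjoint (U i) ((fun x => g • x) '' U i) := by
  choose L hL using hLip
  set C : NNReal := Finset.univ.sup L with hC
  refine ⟨2 * (1 + (C : ℝ)), ?_, ?_⟩
  · nlinarith [C.coe_nonneg]
  intro ε hε X hnet k c hcol
  set D : ℝ := 2 * (1 + (C : ℝ)) with hD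
  have hDpos : 0 < D := by nlinarith [C.coe_nonneg]
  set r : ℝ := 2 * ε / D with hr
  have hrpos : 0 < r := by positivity
  refine ⟨fun i => ⋃ x ∈ {x ∈ X | c x = i}, Metric.ball x r, ?_, ?_, ?_⟩
  · intro i
    exact isOpen_biUnion fun x _ => Metric.isOpen_ball
  · ext m
    simp only [Set.mem_iUnion, Set.mem_univ, iff_true]
    obtain ⟨y, hyX, hy⟩ := hnet m
    refine ⟨c y, y, ⟨hyX, rfl⟩, ?_⟩
    have : ε / D < r := by
      rw [hr, div_lt_div_iff₀ hDpos hDpos]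
      nlinarith
    exact Metric.mem_ball.2 (lt_of_le_of_lt hy this)
  · intro i g hg
    rw [Set.disjoint_left]
    rintro m hm ⟨m', hm', rfl⟩
    simp only [Set.mem_iUnion, Set.mem_setOf_eq, Metric.mem_ball] at hm hm'
    obtain ⟨x, ⟨hxX, hcx⟩, hdx⟩ := hm
    obtain ⟨y, ⟨hyX, hcy⟩, hdy⟩ := hm'
    have hLg : (L g : ℝ) ≤ (C : ℝ) := by
      exact_mod_cast Finset.le_sup (Finset.mem_univ g)
    have hdist : dist x (g • y) ≤ ε := by
      have h1 : dist (g • m') (g • y) ≤ (L g : ℝ) * dist m' y := (hL g).dist_le_mul m' y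
      have h2 : dist x (g • y) ≤ dist x (g • m') + dist (g • m') (g • y) := dist_triangle _ _ _
      have h3 : dist x (g • m') < r := by rwa [dist_comm]
      have h4 : (L g : ℝ) * dist m' y ≤ (C : ℝ) * r := by
        apply mul_le_mul hLg hdy.le dist_nonneg C.coe_nonneg
      have hrval : (1 + (C : ℝ)) * r = ε := by
        rw [hr, hD]; field_simp
      nlinarith [C.coe_nonneg]
    exact hcol x hxX y hyX ⟨g, hg, hdist⟩ (hcx.trans hcy.symm)
end

section
/- For m ≥ 2, consider the cyclic group Z_m acting on the circle S¹ (circumference 2π) by rotations through multiples of 2π/m. Then there exists a closed Z_m-cover of S¹ by m + 1 closed arcs; i.e. cov_{Z_m}(S¹) ≤ m + 1. Explicitly, the m + 1 closed arcs of angular length 2π/(m+1) partitioning S¹ satisfy F_i ∩ ν^k(F_i) = ∅ for all i and all k = 1, …, m − 1, where ν is rotation by 2π/m. -/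
open Set Real


/-- The m+1 closed arcs of angular length 2π/(m+1) give a closed Z_m-cover of
the circle S¹ = ℝ/2πℤ under the rotation action by multiples of 2π/m:
they are closed, they cover S¹, and each arc is disjoint from each of its
nontrivial rotates ν^k (1 ≤ k ≤ m−1), where ν is rotation by 2π/m.
Hence cov_{Z_m}(S¹) ≤ m + 1. -/
theorem zm_cover_circle (m : ℕ) (hm : 2 ≤ m)
    (F : Fin (m + 1) → Set (AddCircle (2 * Real.pi)))
    (hF : ∀ i : Fin (m + 1),
      F i = (fun x : ℝ => (x : AddCircle (2 * Real.pi))) ''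
        Set.Icc ((i : ℝ) * (2 * Real.pi) / (m + 1))
          (((i : ℝ) + 1) * (2 * Real.pi) / (m + 1))) :
    (∀ i, IsClosed (F i)) ∧ (⋃ i, F i) = Set.univ ∧
      ∀ i, ∀ k : ℕ, 1 ≤ k → k ≤ m - 1 →
        Disjoint (F i)
          ((fun x => x + (((k : ℝ) * (2 * Real.pi) / m : ℝ) : AddCircle (2 * Real.pi))) '' F i) := by
  have hπ : (0:ℝ) < 2 * Real.pi := by positivity
  haveI : Fact ((0:ℝ) < 2 * Real.pi) := ⟨hπ⟩
  have hm1 : (0:ℝ) < (m:ℝ) + 1 := by positivity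
  have hmpos : (0:ℝ) < (m:ℝ) := by exact_mod_cast (by omega : 0 < m)
  refine ⟨?_, ?_, ?_⟩
  · intro i
    rw [hF i]
    exact (isCompact_Icc.image (AddCircle.continuous_mk' _)).isClosed
  · apply Set.eq_univ_of_forall
    intro x
    have : x ∈ ((↑) : ℝ → AddCircle (2 * Real.pi)) '' Set.Ico 0 (0 + 2 * Real.pi) := by
      rw [AddCircle.coe_image_Ico_eq]; trivial
    obtain ⟨r, hr, hrx⟩ := this
    rw [zero_add] at hr
    set L : ℝ := 2 * Real.pi / (m + 1) with hL
    have hLpos : 0 < L := by positivity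
    have hrL : (0:ℝ) ≤ r / L := div_nonneg hr.1 hLpos.le
    set j : ℕ := ⌊r / L⌋₊ with hj
    have hjm : j < m + 1 := by
      have h2 : r / L < ((m + 1 : ℕ) : ℝ) := by
        rw [div_lt_iff₀ hLpos]
        push_cast
        calc r < 2 * Real.pi := hr.2
        _ = ((m:ℝ)+1) * L := by rw [hL, mul_div_assoc']; exact (mul_div_cancel_left₀ _ hm1.ne').symm
      exact (Nat.floor_lt hrL).mpr h2
    refine Set.mem_iUnion.mpr ⟨⟨j, hjm⟩, ?_⟩
    rw [hF]
    refine ⟨r, ⟨?_, ?_⟩, hrx⟩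
    · have h1 : (j:ℝ) ≤ r / L := Nat.floor_le hrL
      have h1' : (j:ℝ) * L ≤ r := (le_div_iff₀ hLpos).mp h1
      calc ((⟨j, hjm⟩ : Fin (m+1)) : ℝ) * (2 * Real.pi) / (m + 1) = (j:ℝ) * L := by
            simp [hL]; ring
      _ ≤ r := h1'
    · have h2 : r / L < (j:ℝ) + 1 := Nat.lt_floor_add_one _
      have h2' : r < ((j:ℝ) + 1) * L := by
        rw [div_lt_iff₀ hLpos] at h2; linarith
      calc r ≤ ((j:ℝ) + 1) * L := h2'.le
      _ = (((⟨j, hjm⟩ : Fin (m+1)) : ℝ) + 1) * (2 * Real.pi) / (m + 1) := by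
            simp [hL]; ring
  · intro i k hk1 hk2
    rw [Set.disjoint_left]
    rintro x hx ⟨y, hy, hxy⟩
    rw [hF i] at hx hy
    obtain ⟨a, ha, rfl⟩ := hx
    obtain ⟨b, hb, hba⟩ := hy
    have hba' : (b : AddCircle (2*Real.pi)) = y := hba
    have hxy' : y + (((k:ℝ) * (2*Real.pi) / m : ℝ) : AddCircle (2*Real.pi))
        = (a : AddCircle (2*Real.pi)) := hxy
    have hc : ((a - (b + (k : ℝ) * (2 * Real.pi) / m) : ℝ) : AddCircle (2 * Real.pi)) = 0 := by
      have h1 : ((b + (k:ℝ) * (2*Real.pi) / m : ℝ) : AddCircle (2*Real.pi))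
          = (a : AddCircle (2*Real.pi)) := by
        rw [AddCircle.coe_add, hba']; exact hxy'
      rw [QuotientAddGroup.mk_sub, h1, sub_self]
    rw [AddCircle.coe_eq_zero_iff] at hc
    obtain ⟨n, hn⟩ := hc
    have hn' : a - b = (n : ℝ) * (2 * Real.pi) + (k : ℝ) * (2 * Real.pi) / m := by
      have := hn
      push_cast [zsmul_eq_mul] at this
      linarith
    have hkm : (1:ℝ) ≤ (k:ℝ) := by exact_mod_cast hk1
    have hkm2 : (k:ℝ) ≤ (m:ℝ) - 1 := by
      have h : (k:ℝ) ≤ ((m - 1 : ℕ) : ℝ) := by exact_mod_cast hk2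
      have h' : ((m - 1 : ℕ) : ℝ) = (m:ℝ) - 1 := by
        have h1 : 1 ≤ m := by omega
        push_cast [Nat.cast_sub h1]; ring
      linarith [h' ▸ h]
    have hsplit : ((i:ℝ) + 1) * (2*Real.pi) / (m+1)
        = (i:ℝ) * (2*Real.pi) / (m+1) + 2*Real.pi/(m+1) := by ring
    have habs : |a - b| ≤ 2 * Real.pi / (m + 1) := by
      rw [abs_le]
      constructor <;> [skip; skip] <;>
        · have h1 := ha.1; have h2 := ha.2; have h3 := hb.1; have h4 := hb.2
          rw [hsplit] at h2 h4
          linarith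
    have hbig : 2 * Real.pi / m ≤ |a - b| := by
      rw [hn']
      rcases le_or_gt 0 n with hn0 | hn0
      · have hnn : (0:ℝ) ≤ (n:ℝ) := by exact_mod_cast hn0
        have hnum : 2*Real.pi ≤ (k:ℝ) * (2*Real.pi) := by
          have := mul_le_mul_of_nonneg_right hkm hπ.le
          linarith
        have hdiv : 2*Real.pi/m ≤ (k:ℝ) * (2*Real.pi) / m := by gcongr
        rw [abs_of_nonneg (by positivity)]
        linarith [mul_nonneg hnn hπ.le, hdiv]
      · have hn1 : (n:ℝ) ≤ -1 := by exact_mod_cast (by omega : n ≤ -1)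
        have h1 : (k:ℝ) * (2*Real.pi) / m ≤ ((m:ℝ) - 1) * (2*Real.pi) / m :=
          (div_le_div_iff_of_pos_right hmpos).mpr (by nlinarith [mul_nonneg (sub_nonneg.mpr hkm2) hπ.le])
        have h2 : ((m:ℝ) - 1) * (2*Real.pi) / m = 2*Real.pi - 2*Real.pi/m := by
          field_simp
        have h3 : (n:ℝ) * (2*Real.pi) ≤ -(2*Real.pi) := by
          have := mul_le_mul_of_nonneg_right hn1 hπ.le
          linarith
        have hneg : (n:ℝ) * (2*Real.pi) + (k:ℝ) * (2*Real.pi) / m ≤ -(2*Real.pi/m) := by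
          rw [h2] at h1; linarith
        have hpos : (0:ℝ) < 2*Real.pi/m := by positivity
        rw [abs_of_nonpos (by linarith)]
        linarith
    have hfin : 2 * Real.pi / m ≤ 2 * Real.pi / (m + 1) := le_trans hbig habs
    rw [div_le_div_iff₀ hmpos hm1] at hfin
    have hexp : 2*Real.pi*((m:ℝ)+1) = 2*Real.pi*(m:ℝ) + 2*Real.pi := by ring
    linarith
end

section
/- Let O be a point in the Euclidean plane and ℓ a line with dist(O, ℓ) ≥ d₁ > 0. Let A, B be points such that: A, B, O lie in the same closed half-plane determined by ℓ; the rays from O through A and through B meet ℓ at points A' and B' respectively; dist(O, A') ≤ d₂ and dist(O, B') ≤ d₂; dist(O, A) ≥ κε and dist(O, B) ≥ κε; and dist(A, B) ≤ ε. Then dist(A', B') ≤ d₂²/(κ d₁). -/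
open EuclideanGeometry RealInnerProductSpace

/-- 2D cross product. -/
private def cross2 (x y : EuclideanSpace ℝ (Fin 2)) : ℝ := x 0 * y 1 - x 1 * y 0

private lemma inner_coord (x y : EuclideanSpace ℝ (Fin 2)) :
    ⟪x, y⟫ = x 0 * y 0 + x 1 * y 1 := by
  simp [PiLp.inner_apply, Fin.sum_univ_two, mul_comm]

private lemma norm_sq_coord (x : EuclideanSpace ℝ (Fin 2)) :
    ‖x‖ ^ 2 = x 0 ^ 2 + x 1 ^ 2 := by
  rw [← real_inner_self_eq_norm_sq, inner_coord]; ring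

private lemma lagrange (x y : EuclideanSpace ℝ (Fin 2)) :
    cross2 x y ^ 2 + ⟪x, y⟫ ^ 2 = ‖x‖ ^ 2 * ‖y‖ ^ 2 := by
  rw [inner_coord, norm_sq_coord, norm_sq_coord, cross2]; ring

private lemma abs_cross2_le (x y : EuclideanSpace ℝ (Fin 2)) :
    |cross2 x y| ≤ ‖x‖ * ‖y‖ := by
  have h := lagrange x y
  have h2 : cross2 x y ^ 2 ≤ (‖x‖ * ‖y‖) ^ 2 := by nlinarith [sq_nonneg (⟪x, y⟫ : ℝ)]
  exact abs_le_of_sq_le_sq h2 (by positivity)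

set_option maxHeartbeats 1000000 in
/-- Projection lemma in the plane: O a point, ℓ a line at distance ≥ d₁ from O,
A and B on the same (weak) side of ℓ as O, with the rays from O through A and B
meeting ℓ at A' and B' at distance ≤ d₂ from O; if dist(O,A), dist(O,B) ≥ κε and
dist(A,B) ≤ ε, then dist(A',B') ≤ d₂²/(κ d₁). -/
theorem ray_projection_bound (d₁ d₂ κ ε : ℝ)
    (hd₁ : 0 < d₁) (hd₂ : 0 < d₂) (hκ : 0 < κ) (hε : 0 < ε)
    (O A B A' B' : EuclideanSpace ℝ (Fin 2))
    (ℓ : AffineSubspace ℝ (EuclideanSpace ℝ (Fin 2)))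
    (hline : Module.finrank ℝ ℓ.direction = 1)
    (hℓne : (ℓ : Set (EuclideanSpace ℝ (Fin 2))).Nonempty)
    (hdistO : d₁ ≤ Metric.infDist O (ℓ : Set (EuclideanSpace ℝ (Fin 2))))
    (hsideA : ℓ.WSameSide A O) (hsideB : ℓ.WSameSide B O)
    (hA'mem : A' ∈ ℓ) (hB'mem : B' ∈ ℓ)
    (hrayA : ∃ t : ℝ, 0 ≤ t ∧ A' - O = t • (A - O))
    (hrayB : ∃ t : ℝ, 0 ≤ t ∧ B' - O = t • (B - O))
    (hOA' : dist O A' ≤ d₂) (hOB' : dist O B' ≤ d₂)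
    (hOA : κ * ε ≤ dist O A) (hOB : κ * ε ≤ dist O B)
    (hAB : dist A B ≤ ε) :
    dist A' B' ≤ d₂ ^ 2 / (κ * d₁) := by
  haveI : Nonempty ℓ := hℓne.to_subtype
  obtain ⟨s, hs0, hs⟩ := hrayA
  obtain ⟨t, ht0, ht⟩ := hrayB
  set F : EuclideanSpace ℝ (Fin 2) := ↑(EuclideanGeometry.orthogonalProjection ℓ O) with hF
  set n : EuclideanSpace ℝ (Fin 2) := F - O with hn
  set u : EuclideanSpace ℝ (Fin 2) := A - O with hu
  set v : EuclideanSpace ℝ (Fin 2) := B - O with hv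
  have hFmem : F ∈ ℓ := EuclideanGeometry.orthogonalProjection_mem O
  have hnorth : n ∈ ℓ.directionᗮ := by
    have := EuclideanGeometry.orthogonalProjection_vsub_mem_direction_orthogonal ℓ O
    simpa [hn, hF] using this
  -- ‖n‖ ≥ d₁
  have hd1n : d₁ ≤ ‖n‖ := by
    have h1 : Metric.infDist O (ℓ : Set (EuclideanSpace ℝ (Fin 2))) ≤ dist O F :=
      Metric.infDist_le_dist_of_mem hFmem
    have h2 : dist O F = ‖n‖ := by rw [dist_eq_norm, hn, ← norm_neg]; congr 1; abel
    linarith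
  have hn0 : 0 < ‖n‖ := lt_of_lt_of_le hd₁ hd1n
  -- inner products with n
  have hinner : ∀ P : EuclideanSpace ℝ (Fin 2), P ∈ ℓ → ⟪P - O, n⟫ = ‖n‖ ^ 2 := by
    intro P hP
    have hdir : P - F ∈ ℓ.direction := AffineSubspace.vsub_mem_direction hP hFmem
    have horth : ⟪P - F, n⟫ = 0 :=
      Submodule.inner_right_of_mem_orthogonal hdir hnorth
    have : P - O = (P - F) + n := by rw [hn]; abel
    rw [this, inner_add_left, horth, zero_add, real_inner_self_eq_norm_sq]
  have hiA : s * ⟪u, n⟫ = ‖n‖ ^ 2 := by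
    rw [← real_inner_smul_left, ← hs]; exact hinner A' hA'mem
  have hiB : t * ⟪v, n⟫ = ‖n‖ ^ 2 := by
    rw [← real_inner_smul_left, ← ht]; exact hinner B' hB'mem
  -- cross product identity: cross (A'-B') n = s*t*cross u v
  have hkey : ⟪v, n⟫ * cross2 u n - ⟪u, n⟫ * cross2 v n = cross2 u v * ‖n‖ ^ 2 := by
    rw [inner_coord, inner_coord, norm_sq_coord]; simp only [cross2]; ring
  have hAB' : A' - B' = s • u - t • v := by rw [← hs, ← ht]; abel
  have hcross_lin : cross2 (A' - B') n = s * cross2 u n - t * cross2 v n := by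
    rw [hAB']; simp only [cross2, PiLp.sub_apply, PiLp.smul_apply, smul_eq_mul]; ring
  have hcross : cross2 (A' - B') n * ‖n‖ ^ 2 = s * t * cross2 u v * ‖n‖ ^ 2 := by
    rw [hcross_lin]
    linear_combination (-(s * cross2 u n)) * hiB + (t * cross2 v n) * hiA + (s * t) * hkey
  have hn2 : (0:ℝ) < ‖n‖ ^ 2 := by positivity
  have hcross2 : cross2 (A' - B') n = s * t * cross2 u v :=
    mul_right_cancel₀ (ne_of_gt hn2) hcross
  -- A'-B' is orthogonal to n
  have horth : ⟪A' - B', n⟫ = 0 := by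
    have : A' - B' = (A' - O) - (B' - O) := by abel
    rw [this, inner_sub_left, hinner A' hA'mem, hinner B' hB'mem, sub_self]
  -- ‖A'-B'‖ * ‖n‖ = |cross2 (A'-B') n|
  have hlag := lagrange (A' - B') n
  rw [horth] at hlag
  have hnormeq : ‖A' - B'‖ * ‖n‖ ≤ |cross2 (A' - B') n| := by
    have h2 : (‖A' - B'‖ * ‖n‖) ^ 2 ≤ |cross2 (A' - B') n| ^ 2 := by
      rw [sq_abs]; linarith [hlag]
    have h3 := abs_le_of_sq_le_sq h2 (abs_nonneg _)
    rwa [abs_of_nonneg (by positivity)] at h3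
  -- bound |cross2 u v|
  have hcuv : cross2 u v = cross2 u (v - u) := by
    simp only [cross2, PiLp.sub_apply]; ring
  have hvu : ‖v - u‖ = dist A B := by
    rw [dist_eq_norm, ← norm_neg]; congr 1; rw [hu, hv]; abel
  have hcb : |cross2 u v| ≤ ‖u‖ * ε := by
    rw [hcuv]
    calc |cross2 u (v - u)| ≤ ‖u‖ * ‖v - u‖ := abs_cross2_le u (v - u)
      _ ≤ ‖u‖ * ε := by
          apply mul_le_mul_of_nonneg_left _ (norm_nonneg u)
          rw [hvu]; exact hAB
  -- norms from distances
  have hOAu : dist O A = ‖u‖ := by rw [dist_eq_norm, hu, ← norm_neg]; congr 1; abel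
  have hOBv : dist O B = ‖v‖ := by rw [dist_eq_norm, hv, ← norm_neg]; congr 1; abel
  have hsu : s * ‖u‖ = dist O A' := by
    rw [dist_comm, dist_eq_norm, hs, norm_smul, Real.norm_eq_abs, abs_of_nonneg hs0]
  have htv : t * ‖v‖ = dist O B' := by
    rw [dist_comm, dist_eq_norm, ht, norm_smul, Real.norm_eq_abs, abs_of_nonneg ht0]
  -- main estimate
  have hmain : dist A' B' * ‖n‖ ≤ s * t * (‖u‖ * ε) := by
    rw [dist_eq_norm]
    calc ‖A' - B'‖ * ‖n‖ ≤ |cross2 (A' - B') n| := hnormeq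
      _ = s * t * |cross2 u v| := by
          rw [hcross2, abs_mul, abs_of_nonneg (mul_nonneg hs0 ht0)]
      _ ≤ s * t * (‖u‖ * ε) := mul_le_mul_of_nonneg_left hcb (mul_nonneg hs0 ht0)
  -- combine
  have hεv : κ * ε ≤ ‖v‖ := by rw [← hOBv]; exact hOB
  have hεu : κ * ε ≤ ‖u‖ := by rw [← hOAu]; exact hOA
  have hsub : s * ‖u‖ ≤ d₂ := by rw [hsu]; exact hOA'
  have htvb : t * ‖v‖ ≤ d₂ := by rw [htv]; exact hOB'
  have htb : t * (κ * ε) ≤ d₂ := le_trans (mul_le_mul_of_nonneg_left hεv ht0) htvb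
  have hdnn : (0:ℝ) ≤ dist A' B' := dist_nonneg
  rw [le_div_iff₀ (by positivity)]
  have c1 : κ * (dist A' B' * d₁) ≤ κ * (dist A' B' * ‖n‖) :=
    mul_le_mul_of_nonneg_left (mul_le_mul_of_nonneg_left hd1n hdnn) hκ.le
  have c2 : κ * (dist A' B' * ‖n‖) ≤ κ * (s * t * (‖u‖ * ε)) :=
    mul_le_mul_of_nonneg_left hmain hκ.le
  have c3 : κ * (s * t * (‖u‖ * ε)) = (s * ‖u‖) * (t * (κ * ε)) := by ring
  have c4 : (s * ‖u‖) * (t * (κ * ε)) ≤ d₂ * d₂ :=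
    mul_le_mul hsub htb (mul_nonneg ht0 (by positivity)) hd₂.le
  linarith [c1, c2, c3, c4]
end

section
/- Let K be a compact metric measure space with total volume vol(K) > 0. Suppose D > 0 is a constant such that for each n there are N = N(n) pairwise disjoint closed sets F_1, …, F_N ⊆ K satisfying vol(F_r)/vol(K) ≤ (log n)/(3n) for all r, and N ≥ D·n/log n. Let X_n be a set of n i.i.d. uniform random points on K. Then the probability that at least one F_r contains no point of X_n tends to 1 as n → ∞. -/
open MeasureTheory ProbabilityTheory Filter
open scoped ENNReal NNReal

lemma second_moment_aux {Ω : Type*} [MeasureSpace Ω] [IsProbabilityMeasure (ℙ : Measure Ω)]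
    {m : ℕ} (A : Fin m → Set Ω) (hA : ∀ r, MeasurableSet (A r))
    (hneg : ∀ r s : Fin m, r ≠ s →
      (ℙ (A r ∩ A s)).toReal ≤ (ℙ (A r)).toReal * (ℙ (A s)).toReal)
    {S : ℝ} (hS : S = ∑ r, (ℙ (A r)).toReal) (hSpos : 0 < S) :
    (ℙ (⋃ r, A r)ᶜ).toReal ≤ 1 / S := by
  set f : Fin m → Ω → ℝ := fun r => (A r).indicator (fun _ => (1:ℝ)) with hf
  have hfint : ∀ r, Integrable (f r) ℙ := fun r =>
    (integrable_const (1 : ℝ)).indicator (hA r)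
  set T : Ω → ℝ := fun ω => ∑ r, f r ω with hTdef
  have hTint : Integrable T ℙ := integrable_finset_sum _ fun r _ => hfint r
  have hTeq : ∫ ω, T ω = S := by
    rw [hTdef]
    rw [integral_finset_sum _ fun r _ => hfint r, hS]
    refine Finset.sum_congr rfl fun r _ => ?_
    rw [hf]
    rw [integral_indicator_const (1:ℝ) (hA r), smul_eq_mul, mul_one]; rfl
  have hTsq : ∀ ω, T ω * T ω = ∑ r, ∑ s, (A r ∩ A s).indicator (fun _ => (1:ℝ)) ω := by
    intro ω
    rw [hTdef]
    rw [Finset.sum_mul_sum]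
    refine Finset.sum_congr rfl fun r _ => Finset.sum_congr rfl fun s _ => ?_
    have := Set.inter_indicator_mul (s := A r) (t := A s) (fun _ => (1:ℝ)) (fun _ => (1:ℝ)) ω
    simp only [hf]
    rw [← this]
    norm_num
  have hT2int : Integrable (fun ω => T ω * T ω) ℙ := by
    have : (fun ω => T ω * T ω) =
        fun ω => ∑ r : Fin m, ∑ s : Fin m, (A r ∩ A s).indicator (fun _ => (1:ℝ)) ω := by
      funext ω; exact hTsq ω
    rw [this]
    exact integrable_finset_sum _ fun r _ => integrable_finset_sum _ fun s _ =>
      (integrable_const (1 : ℝ)).indicator ((hA r).inter (hA s))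
  have hT2eq : ∫ ω, T ω * T ω = ∑ r : Fin m, ∑ s : Fin m, (ℙ (A r ∩ A s)).toReal := by
    have : (fun ω => T ω * T ω) =
        fun ω => ∑ r : Fin m, ∑ s : Fin m, (A r ∩ A s).indicator (fun _ => (1:ℝ)) ω := by
      funext ω; exact hTsq ω
    rw [this, integral_finset_sum _ fun r _ => integrable_finset_sum _ fun s _ =>
      (integrable_const (1 : ℝ)).indicator ((hA r).inter (hA s))]
    refine Finset.sum_congr rfl fun r _ => ?_
    rw [integral_finset_sum _ fun s _ => (integrable_const (1 : ℝ)).indicator ((hA r).inter (hA s))]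
    refine Finset.sum_congr rfl fun s _ => ?_
    rw [integral_indicator_const (1:ℝ) ((hA r).inter (hA s)), smul_eq_mul, mul_one]; rfl
  have hPnonneg : ∀ r : Fin m, (0:ℝ) ≤ (ℙ (A r)).toReal := fun r => ENNReal.toReal_nonneg
  have hcov : ∑ r : Fin m, ∑ s : Fin m, (ℙ (A r ∩ A s)).toReal ≤ S + S ^ 2 := by
    have hbound : ∀ r s : Fin m, (ℙ (A r ∩ A s)).toReal ≤
        (if r = s then (ℙ (A r)).toReal else 0) + (ℙ (A r)).toReal * (ℙ (A s)).toReal := by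
      intro r s
      by_cases h : r = s
      · subst h
        simp only [if_pos, Set.inter_self]
        nlinarith [hPnonneg r]
      · simpa [h] using hneg r s h
    calc ∑ r : Fin m, ∑ s : Fin m, (ℙ (A r ∩ A s)).toReal
        ≤ ∑ r : Fin m, ∑ s : Fin m,
            ((if r = s then (ℙ (A r)).toReal else 0) + (ℙ (A r)).toReal * (ℙ (A s)).toReal) :=
          Finset.sum_le_sum fun r _ => Finset.sum_le_sum fun s _ => hbound r s
      _ = S + S ^ 2 := by
          simp only [Finset.sum_add_distrib]
          rw [← Finset.sum_mul_sum, ← hS]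
          have : ∀ r : Fin m, ∑ s : Fin m, (if r = s then (ℙ (A r)).toReal else 0)
              = (ℙ (A r)).toReal := by
            intro r; simp
          rw [Finset.sum_congr rfl fun r _ => this r, ← hS]
          ring
  set C : Set Ω := (⋃ r, A r)ᶜ with hCdef
  have hCmeas : MeasurableSet C := (MeasurableSet.iUnion fun r => hA r).compl
  have hT0 : ∀ ω ∈ C, T ω = 0 := by
    intro ω hω
    rw [hTdef]
    refine Finset.sum_eq_zero fun r _ => ?_
    have : ω ∉ A r := fun h => hω (Set.mem_iUnion.2 ⟨r, h⟩)
    simp [hf, Set.indicator_of_notMem this]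
  have hgint : Integrable (fun ω => (T ω - S) ^ 2) ℙ := by
    have : (fun ω => (T ω - S) ^ 2) =
        fun ω => T ω * T ω - (2 * S) * T ω + S ^ 2 := by funext ω; ring
    rw [this]
    exact (hT2int.sub (hTint.const_mul _)).add (integrable_const _)
  have hvar : ∫ ω, (T ω - S) ^ 2 ≤ S := by
    have : (fun ω => (T ω - S) ^ 2) =
        fun ω => T ω * T ω - (2 * S) * T ω + S ^ 2 := by funext ω; ring
    have hint2 : Integrable (fun ω => 2 * S * T ω) ℙ := hTint.const_mul _
    have hint1 : Integrable (fun ω => T ω * T ω - 2 * S * T ω) ℙ := hT2int.sub hint2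
    rw [this, integral_add hint1 (integrable_const _),
      integral_sub hT2int hint2, integral_const_mul, hTeq, hT2eq, integral_const]
    simp only [measure_univ, probReal_univ, ENNReal.toReal_one, smul_eq_mul, one_mul]
    nlinarith [hcov]
  have hkey : (ℙ C).toReal * S ^ 2 ≤ S := by
    have h1 : ∫ ω in C, (T ω - S) ^ 2 ∂ℙ = (ℙ C).toReal * S ^ 2 := by
      rw [setIntegral_congr_fun hCmeas (g := fun _ => S ^ 2) fun ω hω => by
        rw [hT0 ω hω]; ring]
      rw [setIntegral_const, smul_eq_mul]; rfl
    have h2 : ∫ ω in C, (T ω - S) ^ 2 ∂ℙ ≤ ∫ ω, (T ω - S) ^ 2 :=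
      setIntegral_le_integral hgint (Filter.Eventually.of_forall fun ω => sq_nonneg _)
    linarith
  rw [le_div_iff₀ hSpos]
  nlinarith [ENNReal.toReal_nonneg (a := ℙ C)]

lemma growth_aux (D : ℝ) (hD : 0 < D) :
    Tendsto (fun n : ℕ => D * Real.exp (Real.log n / 2) / Real.log n) atTop atTop := by
  have h1 : Tendsto (fun y : ℝ => D * Real.exp (y / 2) / y) atTop atTop := by
    have h2 : Tendsto (fun z : ℝ => Real.exp z / z) atTop atTop := by
      simpa using Real.tendsto_exp_div_pow_atTop 1
    have h3 : Tendsto (fun y : ℝ => y / 2) atTop atTop :=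
      tendsto_id.atTop_div_const (by norm_num)
    have h4 : Tendsto (fun y : ℝ => Real.exp (y / 2) / (y / 2)) atTop atTop := h2.comp h3
    have h5 := h4.const_mul_atTop (show (0:ℝ) < D / 2 by positivity)
    refine h5.congr' ?_
    filter_upwards [eventually_ne_atTop (0:ℝ)] with y hy
    field_simp
  have hlog : Tendsto (fun n : ℕ => Real.log n) atTop atTop :=
    Real.tendsto_log_atTop.comp tendsto_natCast_atTop_atTop
  exact h1.comp hlog

/-- Let K be a compact metric measure space with 0 < vol(K) < ∞. Suppose D > 0
and for each n there are N(n) pairwise disjoint closed sets F_1,…,F_{N(n)} ⊆ K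
with vol(F_r)/vol(K) ≤ (log n)/(3n) and N(n) ≥ D n / log n. If X_0,…,X_{n-1}
are i.i.d. uniform random points on K, then the probability that some F_r
contains none of the n points tends to 1 as n → ∞. -/
theorem some_set_misses_all_points {K : Type*} [MetricSpace K] [CompactSpace K]
    [MeasurableSpace K] [BorelSpace K]
    (μ : Measure K) [IsFiniteMeasure μ] (hμpos : 0 < μ Set.univ)
    (D : ℝ) (hD : 0 < D)
    (N : ℕ → ℕ) (F : (n : ℕ) → Fin (N n) → Set K)
    (hFclosed : ∀ n r, IsClosed (F n r))
    (hFdisj : ∀ n : ℕ, Pairwise fun r r' : Fin (N n) => Disjoint (F n r) (F n r'))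
    (hFsmall : ∀ n : ℕ, 2 ≤ n → ∀ r : Fin (N n),
      (μ (F n r)).toReal / (μ Set.univ).toReal ≤ Real.log n / (3 * n))
    (hN : ∀ n : ℕ, 2 ≤ n → D * n / Real.log n ≤ (N n : ℝ))
    {Ω : Type*} [MeasureSpace Ω] [IsProbabilityMeasure (ℙ : Measure Ω)]
    (X : ℕ → Ω → K) (hXmeas : ∀ i, Measurable (X i))
    (hindep : iIndepFun X ℙ)
    (hunif : ∀ i, Measure.map (X i) ℙ = (μ Set.univ)⁻¹ • μ) :
    Tendsto (fun n => ℙ {ω | ∃ r : Fin (N n), ∀ j < n, X j ω ∉ F n r})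
      atTop (nhds 1) := by
  classical
  set ν : Measure K := (μ Set.univ)⁻¹ • μ with hν
  have hνprob : IsProbabilityMeasure ν :=
    hunif 0 ▸ Measure.isProbabilityMeasure_map (hXmeas 0).aemeasurable
  set A : (n : ℕ) → Fin (N n) → Set Ω :=
    fun n r => ⋂ j ∈ Finset.range n, X j ⁻¹' (F n r)ᶜ with hA
  have hAmeas : ∀ n r, MeasurableSet (A n r) := fun n r =>
    Finset.measurableSet_biInter _ fun j _ => (hXmeas j) (hFclosed n r).measurableSet.compl
  have hEvent : ∀ n, {ω | ∃ r : Fin (N n), ∀ j < n, X j ω ∉ F n r} = ⋃ r, A n r := by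
    intro n; ext ω
    simp [hA, Set.mem_iUnion, Set.mem_iInter]
  have hmiss : ∀ n (B : Set K), MeasurableSet B →
      ℙ (⋂ j ∈ Finset.range n, X j ⁻¹' Bᶜ) = (ν Bᶜ) ^ n := by
    intro n B hB
    rw [hindep.measure_inter_preimage_eq_mul (Finset.range n)
      (sets := fun _ => Bᶜ) (fun i _ => hB.compl)]
    have hj : ∀ j, ℙ (X j ⁻¹' Bᶜ) = ν Bᶜ := by
      intro j
      rw [← hunif j, Measure.map_apply (hXmeas j) hB.compl]
    simp only [hj, Finset.prod_const, Finset.card_range]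
  have htoReal_compl : ∀ (B : Set K), MeasurableSet B →
      (ν Bᶜ).toReal = 1 - (ν B).toReal := by
    intro B hB
    rw [prob_compl_eq_one_sub hB,
      ENNReal.toReal_sub_of_le prob_le_one ENNReal.one_ne_top, ENNReal.toReal_one]
  have hPA : ∀ n r, (ℙ (A n r)).toReal = (1 - (ν (F n r)).toReal) ^ n := by
    intro n r
    rw [hA]
    rw [hmiss n _ (hFclosed n r).measurableSet, ENNReal.toReal_pow,
      htoReal_compl _ (hFclosed n r).measurableSet]
  have hAinter : ∀ n (r s : Fin (N n)),
      A n r ∩ A n s = ⋂ j ∈ Finset.range n, X j ⁻¹' (F n r ∪ F n s)ᶜ := by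
    intro n r s; ext ω
    simp only [hA, Set.mem_inter_iff, Set.mem_iInter, Set.mem_preimage,
      Set.mem_compl_iff, Set.mem_union, not_or]
    constructor
    · rintro ⟨h1, h2⟩ j hj; exact ⟨h1 j hj, h2 j hj⟩
    · intro h; exact ⟨fun j hj => (h j hj).1, fun j hj => (h j hj).2⟩
  have hPAint : ∀ n (r s : Fin (N n)), r ≠ s →
      (ℙ (A n r ∩ A n s)).toReal ≤ (ℙ (A n r)).toReal * (ℙ (A n s)).toReal := by
    intro n r s hrs
    have hBr := (hFclosed n r).measurableSet
    have hBs := (hFclosed n s).measurableSet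
    have hU : ν (F n r ∪ F n s) = ν (F n r) + ν (F n s) :=
      measure_union (hFdisj n hrs) hBs
    have h1 : (ℙ (A n r ∩ A n s)).toReal
        = (1 - ((ν (F n r)).toReal + (ν (F n s)).toReal)) ^ n := by
      rw [hAinter n r s, hmiss n _ (hBr.union hBs), ENNReal.toReal_pow,
        htoReal_compl _ (hBr.union hBs), hU,
        ENNReal.toReal_add (measure_ne_top ν _) (measure_ne_top ν _)]
    have hpr : (0:ℝ) ≤ (ν (F n r)).toReal := ENNReal.toReal_nonneg
    have hps : (0:ℝ) ≤ (ν (F n s)).toReal := ENNReal.toReal_nonneg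
    have hsum1 : (ν (F n r)).toReal + (ν (F n s)).toReal ≤ 1 := by
      rw [← ENNReal.toReal_add (measure_ne_top ν _) (measure_ne_top ν _), ← hU]
      calc (ν (F n r ∪ F n s)).toReal
          ≤ (1 : ℝ≥0∞).toReal := ENNReal.toReal_mono ENNReal.one_ne_top prob_le_one
        _ = 1 := ENNReal.toReal_one
    rw [h1, hPA n r, hPA n s, ← mul_pow]
    exact pow_le_pow_left₀ (by linarith) (by nlinarith) n
  set g : ℕ → ℝ := fun n => D * Real.exp (Real.log n / 2) / Real.log n with hg
  have hglim : Tendsto g atTop atTop := growth_aux D hD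
  have hSbound : ∀ n : ℕ, 2 ≤ n → g n ≤ ∑ r, (ℙ (A n r)).toReal := by
    intro n hn
    have hn2 : (2:ℝ) ≤ (n:ℝ) := by exact_mod_cast hn
    have hnpos : (0:ℝ) < n := by linarith
    have hn1 : (1:ℝ) < n := by linarith
    have hlogpos : 0 < Real.log n := Real.log_pos hn1
    set c : ℝ := Real.log n / (3 * n) with hc
    have hc0 : 0 ≤ c := div_nonneg hlogpos.le (by positivity)
    have hc3 : c ≤ 1/3 := by
      rw [hc, div_le_iff₀ (by positivity)]
      have hlogle : Real.log n ≤ n := by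
        have := Real.log_le_sub_one_of_pos hnpos
        linarith
      linarith
    have hpc : ∀ r : Fin (N n), (ν (F n r)).toReal ≤ c := by
      intro r
      have hsm := hFsmall n hn r
      have hq : (ν (F n r)).toReal = (μ (F n r)).toReal / (μ Set.univ).toReal := by
        rw [hν]
        simp [Measure.smul_apply, ENNReal.toReal_mul, ENNReal.toReal_inv,
          div_eq_mul_inv, mul_comm]
      rw [hq]; exact hsm
    have hterm : ∀ r : Fin (N n),
        Real.exp (-(Real.log n / 2)) ≤ (ℙ (A n r)).toReal := by
      intro r
      rw [hPA n r]
      have hp0 : 0 ≤ (ν (F n r)).toReal := ENNReal.toReal_nonneg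
      have hpc' := hpc r
      have h1c : (0:ℝ) < 1 - c := by linarith
      have hmono : (1 - c) ^ n ≤ (1 - (ν (F n r)).toReal) ^ n :=
        pow_le_pow_left₀ (by linarith) (by linarith) n
      refine le_trans ?_ hmono
      have hexp : Real.exp (-(c / (1 - c))) ≤ 1 - c := by
        have h2 := Real.add_one_le_exp (c / (1 - c))
        have h3 : 1 ≤ Real.exp (c / (1 - c)) * (1 - c) := by
          have heq : (c / (1 - c)) * (1 - c) = c := by field_simp
          nlinarith
        have hkey : Real.exp (-(c / (1 - c))) * Real.exp (c / (1 - c)) = 1 := by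
          rw [← Real.exp_add]; simp
        nlinarith [Real.exp_pos (-(c / (1 - c)))]
      have hpow : Real.exp (-((n:ℝ) * (c / (1 - c)))) = Real.exp (-(c / (1 - c))) ^ n := by
        rw [← Real.exp_nat_mul]; ring_nf
      have h5 : (n:ℝ) * (c / (1 - c)) ≤ Real.log n / 2 := by
        have hnc : (n:ℝ) * c = Real.log n / 3 := by
          rw [hc]; field_simp
        have h6 : c / (1 - c) ≤ c / (2/3) :=
          div_le_div_of_nonneg_left hc0 (by norm_num) (by linarith)
        calc (n:ℝ) * (c / (1 - c)) ≤ (n:ℝ) * (c / (2/3)) :=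
              mul_le_mul_of_nonneg_left h6 (by positivity)
          _ = Real.log n / 2 := by
              rw [show c / (2/3) = c * (3/2) by ring, ← mul_assoc, hnc]; ring
      calc Real.exp (-(Real.log n / 2))
          ≤ Real.exp (-((n:ℝ) * (c / (1 - c)))) := by
            apply Real.exp_le_exp.2; linarith
        _ = Real.exp (-(c / (1 - c))) ^ n := hpow
        _ ≤ (1 - c) ^ n := pow_le_pow_left₀ (Real.exp_pos _).le hexp n
    have hxn : ((n:ℝ)) * Real.exp (-(Real.log n / 2)) = Real.exp (Real.log n / 2) := by
      have hEE : Real.exp (Real.log n / 2) * Real.exp (Real.log n / 2) = (n:ℝ) := by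
        rw [← Real.exp_add, show Real.log (n:ℝ) / 2 + Real.log (n:ℝ) / 2 = Real.log (n:ℝ) by ring,
          Real.exp_log hnpos]
      calc ((n:ℝ)) * Real.exp (-(Real.log n / 2))
          = (Real.exp (Real.log n / 2) * Real.exp (Real.log n / 2)) * Real.exp (-(Real.log n / 2)) := by
            rw [hEE]
        _ = Real.exp (Real.log n / 2) * (Real.exp (Real.log n / 2) * Real.exp (-(Real.log n / 2))) := by
            ring
        _ = Real.exp (Real.log n / 2) := by rw [← Real.exp_add]; simp
    calc g n = D * ((n:ℝ) * Real.exp (-(Real.log n / 2))) / Real.log n := by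
          rw [hxn]
      _ = (D * n / Real.log n) * Real.exp (-(Real.log n / 2)) := by ring
      _ ≤ (N n : ℝ) * Real.exp (-(Real.log n / 2)) :=
          mul_le_mul_of_nonneg_right (hN n hn) (Real.exp_pos _).le
      _ ≤ ∑ r, (ℙ (A n r)).toReal := by
          have := Finset.card_nsmul_le_sum Finset.univ (fun r => (ℙ (A n r)).toReal)
            (Real.exp (-(Real.log n / 2))) (fun r _ => hterm r)
          simpa [Finset.card_univ, Fintype.card_fin, nsmul_eq_mul] using this
  have hgpos : ∀ᶠ n in atTop, 0 < g n := hglim.eventually_gt_atTop 0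
  have hfinal : ∀ᶠ n in atTop,
      1 - ENNReal.ofReal (1 / g n)
        ≤ ℙ {ω | ∃ r : Fin (N n), ∀ j < n, X j ω ∉ F n r} := by
    filter_upwards [eventually_ge_atTop 2, hgpos] with n hn hgn
    have hS : 0 < ∑ r, (ℙ (A n r)).toReal := lt_of_lt_of_le hgn (hSbound n hn)
    have hcheb := second_moment_aux (A n) (hAmeas n)
      (fun r s hrs => hPAint n r s hrs) rfl hS
    have h7 : (ℙ (⋃ r, A n r)ᶜ).toReal ≤ 1 / g n :=
      hcheb.trans (one_div_le_one_div_of_le hgn (hSbound n hn))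
    have h8 : ℙ (⋃ r, A n r)ᶜ ≤ ENNReal.ofReal (1 / g n) :=
      (ENNReal.le_ofReal_iff_toReal_le (measure_ne_top _ _) (by positivity)).2 h7
    rw [hEvent n]
    have h9 : ℙ (⋃ r, A n r) = 1 - ℙ (⋃ r, A n r)ᶜ := by
      rw [prob_compl_eq_one_sub (MeasurableSet.iUnion (hAmeas n)),
        ENNReal.sub_sub_cancel ENNReal.one_ne_top prob_le_one]
    rw [h9]
    exact tsub_le_tsub_left h8 1
  have hlow : Tendsto (fun n => 1 - ENNReal.ofReal (1 / g n)) atTop (nhds 1) := by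
    have h1 : Tendsto (fun n => (1:ℝ) / g n) atTop (nhds 0) := by
      simpa [one_div, Pi.inv_def] using hglim.inv_tendsto_atTop
    have h2 : Tendsto (fun n => ENNReal.ofReal (1 / g n)) atTop (nhds 0) := by
      have := (ENNReal.continuous_ofReal.tendsto 0).comp h1
      simpa [Function.comp_def] using this
    have h3 := ((ENNReal.continuous_sub_left ENNReal.one_ne_top).tendsto 0).comp h2
    simpa [Function.comp_def] using h3
  exact tendsto_of_tendsto_of_tendsto_of_le_of_le' hlow tendsto_const_nhds hfinal
    (Filter.Eventually.of_forall fun n => prob_le_one)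
end

section
/- Let G be a finite group acting freely on a compact metric space M via Lipschitz maps, and suppose integers m ≤ t are given with |G| = m and cov_G(M) ≥ t (e.g. M an E_{t−m}G space). Then there exists a finite graph H with clique number ω(H) = m and chromatic number χ(H) ≥ t; namely H = Bor_G(X, ε) for a suitable finite (ε/D)-net X ⊆ M and small ε. -/
/-- Graphs with clique number m and chromatic number ≥ t: if G is a finite
group of order m acting freely via Lipschitz maps on a compact metric space M
with cov_G(M) ≥ t (every open G-cover has at least t sets), then for a suitable
ε > 0 and finite vertex set X ⊆ M, the G-Borsuk graph H = Bor_G(X, ε) has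
clique number exactly m and chromatic number at least t (every proper coloring
uses at least t colors). -/
theorem borsuk_graph_clique_chromatic {G M : Type*} [Group G] [Fintype G]
    [MetricSpace M] [CompactSpace M] [MulAction G M]
    (hfree : ∀ g : G, g ≠ 1 → ∀ x : M, g • x ≠ x)
    (hLip : ∀ g : G, ∃ L : NNReal, LipschitzWith L (fun x : M => g • x))
    (m t : ℕ) (hm : Fintype.card G = m) (hmt : m ≤ t)
    (hcov : ∀ (n : ℕ) (U : Fin n → Set M), (∀ i, IsOpen (U i)) →
      (⋃ i, U i) = Set.univ →
      (∀ i, ∀ g : G, g ≠ 1 → Disjoint (U i) ((fun x => g • x) '' U i)) → t ≤ n) :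
    ∃ ε : ℝ, 0 < ε ∧ ∃ X : Finset M,
      ((∃ S : Finset M, S ⊆ X ∧ S.card = m ∧
          ∀ x ∈ S, ∀ y ∈ S, x ≠ y → ∃ g : G, g ≠ 1 ∧ dist x (g • y) ≤ ε) ∧
        ∀ S : Finset M, S ⊆ X →
          (∀ x ∈ S, ∀ y ∈ S, x ≠ y → ∃ g : G, g ≠ 1 ∧ dist x (g • y) ≤ ε) →
          S.card ≤ m) ∧
      ∀ (n : ℕ) (c : M → Fin n),
        (∀ x ∈ X, ∀ y ∈ X, (∃ g : G, g ≠ 1 ∧ dist x (g • y) ≤ ε) → c x ≠ c y) →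
        t ≤ n := by
  classical
  have hm0 : 0 < m := hm ▸ Fintype.card_pos
  -- M is nonempty
  have hMne : Nonempty M := by
    by_contra h
    rw [not_nonempty_iff] at h
    have h0 : t ≤ 0 := by
      refine hcov 0 (fun _ => ∅) (fun i => isOpen_empty) ?_ (fun i => i.elim0)
      simp [Set.univ_eq_empty_iff.mpr h]
    omega
  obtain ⟨x₀⟩ := hMne
  -- minimal displacement δ
  have hδex : ∀ g : G, ∃ δ : ℝ, 0 < δ ∧ ∀ x : M, g ≠ 1 → δ ≤ dist x (g • x) := by
    intro g
    by_cases hg : g = 1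
    · exact ⟨1, one_pos, fun x h => absurd hg h⟩
    · obtain ⟨L, hL⟩ := hLip g
      have hc : Continuous fun x : M => dist x (g • x) :=
        continuous_id.dist hL.continuous
      obtain ⟨x, -, hx⟩ := isCompact_univ.exists_isMinOn ⟨x₀, Set.mem_univ _⟩
        hc.continuousOn
      refine ⟨dist x (g • x), ?_, fun y _ => hx (Set.mem_univ y)⟩
      exact dist_pos.mpr (Ne.symm (hfree g hg x))
  choose δf hδpos hδle using hδex
  set δ : ℝ := Finset.univ.inf' Finset.univ_nonempty δf with hδdef
  have hδ0 : 0 < δ := by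
    rw [hδdef, Finset.lt_inf'_iff]
    exact fun g _ => hδpos g
  have hδd : ∀ g : G, g ≠ 1 → ∀ x : M, δ ≤ dist x (g • x) := fun g hg x =>
    (Finset.inf'_le δf (Finset.mem_univ g)).trans (hδle g x hg)
  -- uniform Lipschitz bound
  choose Lf hLf using hLip
  set Lr : ℝ := 1 + ↑(Finset.univ.sup' Finset.univ_nonempty Lf) with hLrdef
  have hLr1 : (1 : ℝ) ≤ Lr := by
    rw [hLrdef]
    have : (0 : ℝ) ≤ ↑(Finset.univ.sup' Finset.univ_nonempty Lf) :=
      NNReal.coe_nonneg _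
    linarith
  have hLr0 : (0 : ℝ) ≤ Lr := by linarith
  have hLr : ∀ (g : G) (a b : M), dist (g • a) (g • b) ≤ Lr * dist a b := by
    intro g a b
    have h1 : dist (g • a) (g • b) ≤ (Lf g : ℝ) * dist a b := (hLf g).dist_le_mul a b
    have h2 : (Lf g : ℝ) ≤ Lr := by
      rw [hLrdef]
      have : Lf g ≤ Finset.univ.sup' Finset.univ_nonempty Lf :=
        Finset.le_sup' Lf (Finset.mem_univ g)
      have := NNReal.coe_le_coe.mpr this
      linarith
    calc dist (g • a) (g • b) ≤ (Lf g : ℝ) * dist a b := h1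
      _ ≤ Lr * dist a b := by
          exact mul_le_mul_of_nonneg_right h2 dist_nonneg
  -- choose ε and r
  set ε : ℝ := δ / (2 * Lr + 2) with hεdef
  have hden : (0 : ℝ) < 2 * Lr + 2 := by linarith
  have hε : 0 < ε := div_pos hδ0 hden
  have hεeq : ε * (2 * Lr + 2) = δ := div_mul_cancel₀ δ (ne_of_gt hden)
  have hkey : 2 * Lr * ε + ε < δ := by nlinarith
  set r : ℝ := ε / (Lr + 1) with hrdef
  have hden2 : (0 : ℝ) < Lr + 1 := by linarith
  have hr0 : 0 < r := div_pos hε hden2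
  have hreq : r * (Lr + 1) = ε := div_mul_cancel₀ ε (ne_of_gt hden2)
  -- finite net
  obtain ⟨N, hN⟩ := isCompact_univ.elim_finite_subcover
    (fun x : M => Metric.ball x r) (fun x => Metric.isOpen_ball)
    (fun p _ => Set.mem_iUnion.mpr ⟨p, Metric.mem_ball_self hr0⟩)
  -- the orbit clique
  set S₀ : Finset M := Finset.image (fun g : G => g • x₀) Finset.univ with hS₀def
  have hinj : Function.Injective (fun g : G => g • x₀) := by
    intro g h hgh
    by_contra hne
    have h1 : h⁻¹ * g ≠ 1 := fun h2 => hne (inv_mul_eq_one.mp h2).symm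
    have h2 : (h⁻¹ * g) • x₀ = x₀ := by
      simp only at hgh
      rw [mul_smul, hgh, inv_smul_smul]
    exact hfree _ h1 x₀ h2
  set X : Finset M := N ∪ S₀ with hXdef
  refine ⟨ε, hε, X, ⟨⟨S₀, Finset.subset_union_right, ?_, ?_⟩, ?_⟩, ?_⟩
  · -- card S₀ = m
    rw [hS₀def, Finset.card_image_of_injective _ hinj, Finset.card_univ, hm]
  · -- S₀ is a clique
    intro x hx y hy hxy
    rw [hS₀def, Finset.mem_image] at hx hy
    obtain ⟨g, -, rfl⟩ := hx
    obtain ⟨h, -, rfl⟩ := hy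
    refine ⟨g * h⁻¹, ?_, ?_⟩
    · intro heq
      apply hxy
      have : g = h := by
        rwa [mul_inv_eq_one] at heq
      rw [this]
    · have : (g * h⁻¹) • h • x₀ = g • x₀ := by
        rw [smul_smul, mul_assoc, inv_mul_cancel, mul_one]
      rw [this, dist_self]
      exact le_of_lt hε
  · -- no clique larger than m
    intro S hSX hScl
    by_contra hcard
    push_neg at hcard
    have hSne : S.Nonempty := Finset.card_pos.mp (by omega)
    obtain ⟨a, ha⟩ := hSne
    set f : M → G := fun x =>
      if h : ∃ g : G, g ≠ 1 ∧ dist a (g • x) ≤ ε then h.choose else 1 with hfdef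
    have hmaps : ∀ x ∈ S.erase a, f x ∈ Finset.univ.erase (1 : G) := by
      intro x hx
      rw [Finset.mem_erase] at hx
      have hex : ∃ g : G, g ≠ 1 ∧ dist a (g • x) ≤ ε :=
        hScl a ha x hx.2 (Ne.symm hx.1)
      rw [hfdef]
      simp only [dif_pos hex]
      exact Finset.mem_erase.mpr ⟨hex.choose_spec.1, Finset.mem_univ _⟩
    have hcardlt : (Finset.univ.erase (1 : G)).card < (S.erase a).card := by
      rw [Finset.card_erase_of_mem (Finset.mem_univ _), Finset.card_univ, hm,
        Finset.card_erase_of_mem ha]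
      omega
    obtain ⟨x, hx, y, hy, hxy, hfeq⟩ :=
      Finset.exists_ne_map_eq_of_card_lt_of_maps_to hcardlt hmaps
    have hexx : ∃ g : G, g ≠ 1 ∧ dist a (g • x) ≤ ε :=
      hScl a ha x (Finset.mem_of_mem_erase hx) (Ne.symm (Finset.ne_of_mem_erase hx))
    have hexy : ∃ g : G, g ≠ 1 ∧ dist a (g • y) ≤ ε :=
      hScl a ha y (Finset.mem_of_mem_erase hy) (Ne.symm (Finset.ne_of_mem_erase hy))
    have hfx : f x = hexx.choose := by rw [hfdef]; simp only [dif_pos hexx]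
    have hfy : f y = hexy.choose := by rw [hfdef]; simp only [dif_pos hexy]
    set g : G := hexx.choose with hgdef
    have hdx : dist a (g • x) ≤ ε := hexx.choose_spec.2
    have hdy : dist a (g • y) ≤ ε := by
      have e : g = hexy.choose := by rw [← hfx, hfeq, hfy]
      rw [e]
      exact hexy.choose_spec.2
    have d1 : dist (g • x) (g • y) ≤ 2 * ε := by
      calc dist (g • x) (g • y) ≤ dist (g • x) a + dist a (g • y) := dist_triangle _ _ _
        _ ≤ ε + ε := by rw [dist_comm (g • x) a]; exact add_le_add hdx hdy
        _ = 2 * ε := by ring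
    have d2 : dist x y ≤ Lr * (2 * ε) := by
      have h1 := hLr g⁻¹ (g • x) (g • y)
      rw [inv_smul_smul, inv_smul_smul] at h1
      calc dist x y ≤ Lr * dist (g • x) (g • y) := h1
        _ ≤ Lr * (2 * ε) := mul_le_mul_of_nonneg_left d1 hLr0
    obtain ⟨h, hh1, hhd⟩ := hScl x (Finset.mem_of_mem_erase hx)
      y (Finset.mem_of_mem_erase hy) hxy
    have hfin : δ ≤ dist y (h • y) := hδd h hh1 y
    have : dist y (h • y) ≤ dist y x + dist x (h • y) := dist_triangle _ _ _
    rw [dist_comm y x] at this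
    nlinarith
  · -- chromatic number ≥ t
    intro n c hc
    set U : Fin n → Set M := fun i =>
      ⋃ x ∈ X.filter (fun x => c x = i), Metric.ball x r with hUdef
    refine hcov n U (fun i => isOpen_biUnion fun x _ => Metric.isOpen_ball) ?_ ?_
    · rw [Set.eq_univ_iff_forall]
      intro p
      have hp : p ∈ ⋃ x ∈ N, Metric.ball x r := hN (Set.mem_univ p)
      rw [Set.mem_iUnion₂] at hp
      obtain ⟨x, hxN, hpx⟩ := hp
      rw [Set.mem_iUnion]
      refine ⟨c x, ?_⟩
      exact Set.mem_iUnion₂.mpr ⟨x, Finset.mem_filter.mpr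
        ⟨Finset.mem_union_left _ hxN, rfl⟩, hpx⟩
    · intro i g hg
      rw [Set.disjoint_left]
      rintro p hp ⟨q, hq, rfl⟩
      rw [hUdef, Set.mem_iUnion₂] at hp hq
      obtain ⟨x, hxm, hpx⟩ := hp
      obtain ⟨y, hym, hqy⟩ := hq
      rw [Finset.mem_filter] at hxm hym
      rw [Metric.mem_ball] at hpx hqy
      have hdist : dist x (g • y) ≤ ε := by
        have h1 : dist ((fun x => g • x) q) (g • y) ≤ Lr * dist q y := hLr g q y
        have h2 : Lr * dist q y ≤ Lr * r :=
          mul_le_mul_of_nonneg_left (le_of_lt hqy) hLr0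
        have h3 : dist x (g • y) ≤ dist x ((fun x => g • x) q) +
            dist ((fun x => g • x) q) (g • y) := dist_triangle _ _ _
        rw [dist_comm x ((fun x => g • x) q)] at h3
        have : r + Lr * r = ε := by rw [← hreq]; ring
        linarith
      exact hc x hxm.1 y hym.1 ⟨g, hg, hdist⟩ (hxm.2.trans hym.2.symm)
end

section
/- Let G be a finite group of order m acting freely on a finite graph H' defined as follows: T is a finite free G-simplicial complex and H' has vertex set V(T) with edges x ∼ y whenever {x, g·y} is an edge or vertex pair forming a simplex of T for some non-identity g ∈ G. If H' admits a proper coloring with χ colors, then composing with a graph homomorphism H' → K_χ and using functoriality of Hom(K_m, −) yields a chain of G-equivariant maps T → Hom(K_m, H') → Hom(K_m, K_χ); consequently ind_G(T) ≤ dim Hom(K_m, K_χ) = χ − m, i.e. χ ≥ ind_G(T) + |G|. -/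
open Finset

/-- Uniqueness of convex (indeed affine) representations over an affinely
independent finite set. -/
lemma bary_unique {E : Type*} [AddCommGroup E] [Module ℝ E] [DecidableEq E] {σ : Finset E}
    (hσ : AffineIndependent ℝ ((↑) : σ → E)) {f g : E → ℝ}
    (hf0 : ∀ v ∉ σ, f v = 0) (hg0 : ∀ v ∉ σ, g v = 0)
    (hf1 : ∑ v ∈ σ, f v = 1) (hg1 : ∑ v ∈ σ, g v = 1)
    (hfg : ∑ v ∈ σ, f v • v = ∑ v ∈ σ, g v • v) : f = g := by
  have hsum : ∑ v : σ, (f v - g v) = 0 := by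
    rw [Finset.sum_sub_distrib, Finset.sum_coe_sort σ f, Finset.sum_coe_sort σ g, hf1, hg1,
      sub_self]
  have hsum' : ∑ v ∈ Finset.univ, (fun v : σ => f v - g v) v = 0 := hsum
  have hvsub : Finset.univ.weightedVSub ((↑) : σ → E) (fun v : σ => f v - g v) = 0 := by
    rw [Finset.weightedVSub_eq_linear_combination _ hsum']
    have : ∑ v : σ, (f v - g v) • (v : E) = 0 := by
      have : ∑ v : σ, (f v - g v) • (v : E)
          = ∑ v : σ, (f (v : E)) • (v : E) - ∑ v : σ, (g (v : E)) • (v : E) := by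
        rw [← Finset.sum_sub_distrib]
        exact Finset.sum_congr rfl fun v _ => sub_smul _ _ _
      rw [this, Finset.sum_coe_sort σ (fun v => f v • v),
        Finset.sum_coe_sort σ (fun v => g v • v), hfg, sub_self]
    exact this
  have hzero := hσ Finset.univ (fun v : σ => f v - g v) hsum' hvsub
  funext v
  by_cases hv : v ∈ σ
  · have := hzero ⟨v, hv⟩ (Finset.mem_univ _)
    simpa [sub_eq_zero] using this
  · rw [hf0 v hv, hg0 v hv]

/-- Existence of continuous barycentric coordinates on the convex hull of an
affinely independent finite set. -/
lemma coords_exist {E : Type*} [NormedAddCommGroup E] [NormedSpace ℝ E] [DecidableEq E]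
    (σ : Finset E) (hσ : AffineIndependent ℝ ((↑) : σ → E)) :
    ∃ B : E → E → ℝ,
      (∀ v, ContinuousOn (fun x => B x v) (convexHull ℝ (σ : Set E))) ∧
      ∀ x ∈ convexHull ℝ (σ : Set E),
        (∀ v, 0 ≤ B x v) ∧ (∀ v ∉ σ, B x v = 0) ∧
        (∑ v ∈ σ, B x v = 1) ∧ (∑ v ∈ σ, B x v • v = x) := by
  classical
  set S : Set (σ → ℝ) := stdSimplex ℝ σ with hS
  set φ : (σ → ℝ) → E := fun f => ∑ v : σ, f v • (v : E) with hφ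
  have hφc : Continuous φ := by
    apply continuous_finset_sum
    intro v _
    exact (continuous_apply v).smul continuous_const
  have hmaps : ∀ f ∈ S, φ f ∈ convexHull ℝ (σ : Set E) := by
    intro f hf
    exact mem_convexHull_of_exists_fintype f ((↑) : σ → E) hf.1 hf.2
      (fun v => v.2) rfl
  have hsurj : ∀ x ∈ convexHull ℝ (σ : Set E), ∃ f ∈ S, φ f = x := by
    intro x hx
    rw [Finset.convexHull_eq] at hx
    obtain ⟨w, hw0, hw1, hwx⟩ := hx
    refine ⟨fun v => w v, ⟨fun v => hw0 v v.2, ?_⟩, ?_⟩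
    · rw [Finset.sum_coe_sort σ w]; exact hw1
    · rw [hφ]
      rw [← hwx, Finset.centerMass_eq_of_sum_1 _ _ hw1]
      simp only [id]
      exact Finset.sum_coe_sort σ (fun v => w v • v)
  have hinj : ∀ f ∈ S, ∀ g ∈ S, φ f = φ g → f = g := by
    intro f hf g hg hfg
    have hsum : ∑ v ∈ Finset.univ, (fun v : σ => f v - g v) v = 0 := by
      rw [Finset.sum_sub_distrib]
      change ∑ v : σ, f v - ∑ v : σ, g v = 0
      rw [hf.2, hg.2, sub_self]
    have hvsub : Finset.univ.weightedVSub ((↑) : σ → E) (fun v : σ => f v - g v) = 0 := by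
      rw [Finset.weightedVSub_eq_linear_combination _ hsum]
      have : ∑ v : σ, (f v - g v) • (v : E) = φ f - φ g := by
        rw [hφ, ← Finset.sum_sub_distrib]
        exact Finset.sum_congr rfl fun v _ => sub_smul _ _ _
      rw [this, hfg, sub_self]
    have hzero := hσ Finset.univ (fun v : σ => f v - g v) hsum hvsub
    funext v
    have := hzero v (Finset.mem_univ _)
    simpa [sub_eq_zero] using this
  -- the associated homeomorphism
  set K : Set E := convexHull ℝ (σ : Set E) with hK
  set ψ : S → K := fun f => ⟨φ f, hmaps f f.2⟩ with hψ
  have hbij : Function.Bijective ψ := by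
    constructor
    · intro f g hfg
      apply Subtype.ext
      exact hinj f f.2 g g.2 (congrArg Subtype.val hfg)
    · intro x
      obtain ⟨f, hf, hfx⟩ := hsurj x x.2
      exact ⟨⟨f, hf⟩, Subtype.ext hfx⟩
  haveI : CompactSpace S := isCompact_iff_compactSpace.mp (isCompact_stdSimplex ℝ σ)
  set e : S ≃ K := Equiv.ofBijective ψ hbij with he
  have hce : Continuous e := by
    apply Continuous.subtype_mk
    exact hφc.comp continuous_subtype_val
  set homeo : S ≃ₜ K := Continuous.homeoOfEquivCompactToT2 (f := e) hce with hhomeo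
  set B : E → E → ℝ := fun x v =>
    if hx : x ∈ K then (if hv : v ∈ σ then ((homeo.symm ⟨x, hx⟩ : S) : σ → ℝ) ⟨v, hv⟩ else 0)
    else 0 with hB
  have hval : ∀ (x : E) (hx : x ∈ K) (v : E) (hv : v ∈ σ),
      B x v = ((homeo.symm ⟨x, hx⟩ : S) : σ → ℝ) ⟨v, hv⟩ := by
    intro x hx v hv
    rw [hB]
    simp only [dif_pos hx, dif_pos hv]
  have hφsymm : ∀ (x : E) (hx : x ∈ K), φ ((homeo.symm ⟨x, hx⟩ : S) : σ → ℝ) = x := by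
    intro x hx
    have h1 : homeo (homeo.symm ⟨x, hx⟩) = ⟨x, hx⟩ := homeo.apply_symm_apply _
    have h2 : ψ (homeo.symm ⟨x, hx⟩) = ⟨x, hx⟩ := h1
    exact congrArg Subtype.val h2
  refine ⟨B, ?_, ?_⟩
  · intro v
    rw [continuousOn_iff_continuous_restrict]
    by_cases hv : v ∈ σ
    · have : K.restrict (fun x => B x v)
          = fun x : K => ((homeo.symm x : S) : σ → ℝ) ⟨v, hv⟩ := by
        funext x
        have : B (x : E) v = ((homeo.symm ⟨(x : E), x.2⟩ : S) : σ → ℝ) ⟨v, hv⟩ :=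
          hval x x.2 v hv
        exact this
      change Continuous (K.restrict fun x => B x v)
      rw [this]
      exact (continuous_apply (⟨v, hv⟩ : σ)).comp
        (continuous_subtype_val.comp homeo.symm.continuous)
    · have : K.restrict (fun x => B x v) = fun _ : K => (0 : ℝ) := by
        funext x
        rw [hB]
        simp [dif_pos x.2, dif_neg hv]
        rfl
      change Continuous (K.restrict fun x => B x v)
      rw [this]
      exact continuous_const
  · intro x hx
    have hmem : ((homeo.symm ⟨x, hx⟩ : S) : σ → ℝ) ∈ stdSimplex ℝ σ :=
      (homeo.symm ⟨x, hx⟩).2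
    refine ⟨?_, ?_, ?_, ?_⟩
    · intro v
      rw [hB]
      by_cases hv : v ∈ σ
      · simp only [dif_pos hx, dif_pos hv]
        exact hmem.1 _
      · simp [dif_pos hx, dif_neg hv]
    · intro v hv
      rw [hB]
      simp [dif_pos hx, dif_neg hv]
    · calc ∑ v ∈ σ, B x v = ∑ v ∈ σ.attach, B x (v : E) := (Finset.sum_attach σ _).symm
        _ = ∑ v ∈ σ.attach, ((homeo.symm ⟨x, hx⟩ : S) : σ → ℝ) v := by
            refine Finset.sum_congr rfl fun v _ => ?_
            rw [hval x hx (v : E) v.2]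
        _ = ∑ v : σ, ((homeo.symm ⟨x, hx⟩ : S) : σ → ℝ) v := by rw [Finset.univ_eq_attach]
        _ = 1 := hmem.2
    · calc ∑ v ∈ σ, B x v • v = ∑ v ∈ σ.attach, B x (v : E) • (v : E) :=
          (Finset.sum_attach σ _).symm
        _ = ∑ v ∈ σ.attach, ((homeo.symm ⟨x, hx⟩ : S) : σ → ℝ) v • (v : E) := by
            refine Finset.sum_congr rfl fun v _ => ?_
            rw [hval x hx (v : E) v.2]
        _ = φ ((homeo.symm ⟨x, hx⟩ : S) : σ → ℝ) := by rw [hφ, Finset.univ_eq_attach]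
        _ = x := hφsymm x hx



/-- The geometric realization of the canonical d-dimensional classifying space
E_dG = G^{*(d+1)} (the (d+1)-fold join of the finite set G), realized inside
the simplex on the vertex set Fin (d+1) × G: points are convex-combination
weight functions supported on at most one vertex per join coordinate.
G acts (freely) by left multiplication on the G-coordinate. -/
def EJoin (d : ℕ) (G : Type*) [Fintype G] : Set (Fin (d + 1) × G → ℝ) :=
  {f | (∀ p, 0 ≤ f p) ∧ (∑ p, f p) = 1 ∧
    ∀ i : Fin (d + 1), {g : G | f (i, g) ≠ 0}.Subsingleton}

/-- Topological lower bound via Hom complexes: let T be a finite free geometric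
G-simplicial complex (G of order m acting by continuous linear maps preserving
the faces of T), and let H' be the graph on the vertices of T with x ∼ y iff
{x, g·y} is a simplex of T for some non-identity g. If H' admits a proper
coloring with χ colors, then χ ≥ |G| and (via the chain of G-maps
T → Hom(K_m, H') → Hom(K_m, K_χ) and ind_G ≤ dim Hom(K_m, K_χ) = χ − m)
there is a continuous G-equivariant map ∥T∥ → ∥E_{χ−m}G∥; i.e.
ind_G(T) ≤ χ − |G|, so χ ≥ ind_G(T) + |G|. -/
theorem chromatic_ge_index_add_card {G E : Type*} [Group G] [Fintype G]
    [NormedAddCommGroup E] [NormedSpace ℝ E] [DecidableEq E]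
    [DistribMulAction G E] [SMulCommClass G ℝ E]
    (hactcont : ∀ g : G, Continuous fun x : E => g • x)
    (T : Geometry.SimplicialComplex ℝ E)
    (hfin : T.faces.Finite)
    (hGfaces : ∀ g : G, ∀ σ ∈ T.faces, σ.image (fun x => g • x) ∈ T.faces)
    (hfree : ∀ g : G, g ≠ 1 → ∀ σ ∈ T.faces, ∀ x ∈ σ, g • x ∉ σ)
    (hne : ∃ x : E, {x} ∈ T.faces)
    (χ : ℕ) (c : E → Fin χ)
    (hcol : ∀ x y : E, {x} ∈ T.faces → {y} ∈ T.faces →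
      (∃ g : G, g ≠ 1 ∧ ({x, g • y} : Finset E) ∈ T.faces) → c x ≠ c y) :
    Fintype.card G ≤ χ ∧
      ∃ Φ : E → (Fin (χ - Fintype.card G + 1) × G → ℝ),
        ContinuousOn Φ T.space ∧
        (∀ x ∈ T.space, Φ x ∈ EJoin (χ - Fintype.card G) G) ∧
        ∀ g : G, ∀ x ∈ T.space, Φ (g • x) = fun p => Φ x (p.1, g⁻¹ * p.2) := by
  classical
  obtain ⟨x₀, hx₀⟩ := hne
  -- vertices are stable under the action
  have hvsmul : ∀ (g : G) {x : E}, {x} ∈ T.faces → {g • x} ∈ T.faces := by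
    intro g x hx
    have := hGfaces g {x} hx
    simpa using this
  -- distinct translates of a vertex get distinct colors
  have hadj : ∀ (x : E), {x} ∈ T.faces → ∀ g h : G, g ≠ h →
      c (g⁻¹ • x) ≠ c (h⁻¹ • x) := by
    intro x hx g h hgh
    refine hcol _ _ (hvsmul g⁻¹ hx) (hvsmul h⁻¹ hx) ⟨g⁻¹ * h, ?_, ?_⟩
    · intro e
      exact hgh (by rwa [inv_mul_eq_one] at e)
    · have h1 : (g⁻¹ * h) • (h⁻¹ • x) = g⁻¹ • x := by
        rw [smul_smul, mul_assoc, mul_inv_cancel, mul_one]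
      rw [h1, Finset.pair_eq_singleton]
      exact hvsmul g⁻¹ hx
  have hcard : Fintype.card G ≤ χ := by
    have hinj : Function.Injective (fun g : G => c (g⁻¹ • x₀)) := by
      intro g h he
      by_contra hgh
      exact hadj x₀ hx₀ g h hgh he
    calc Fintype.card G ≤ Fintype.card (Fin χ) := Fintype.card_le_of_injective _ hinj
      _ = χ := Fintype.card_fin χ
  have hχpos : 1 ≤ χ := le_trans Fintype.card_pos hcard
  -- the minimizing group element
  have hminex : ∀ x : E, ∃ g : G, ∀ h : G, c (g⁻¹ • x) ≤ c (h⁻¹ • x) := by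
    intro x
    obtain ⟨g, -, hg⟩ := Finset.exists_min_image Finset.univ (fun g : G => c (g⁻¹ • x))
      ⟨1, Finset.mem_univ 1⟩
    exact ⟨g, fun h => hg h (Finset.mem_univ h)⟩
  choose gsel hgsel using hminex
  set d := χ - Fintype.card G with hd
  -- the minimal color over an orbit of a vertex is at most χ - m
  have hival : ∀ {x : E}, {x} ∈ T.faces → (c ((gsel x)⁻¹ • x)).val ≤ d := by
    intro x hx
    have hinj : Function.Injective (fun g : G => (c (g⁻¹ • x)).val) := by
      intro g h he
      by_contra hgh
      exact hadj x hx g h hgh (Fin.val_injective he)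
    set S : Finset ℕ := Finset.image (fun g : G => (c (g⁻¹ • x)).val) Finset.univ with hS
    have hcardS : S.card = Fintype.card G := by
      rw [hS, Finset.card_image_of_injective _ hinj, Finset.card_univ]
    have hsub : S ⊆ Finset.Icc (c ((gsel x)⁻¹ • x)).val (χ - 1) := by
      intro n hn
      rw [hS, Finset.mem_image] at hn
      obtain ⟨g, -, rfl⟩ := hn
      rw [Finset.mem_Icc]
      refine ⟨hgsel x g, ?_⟩
      have := (c (g⁻¹ • x)).isLt
      omega
    have := Finset.card_le_card hsub
    rw [hcardS, Nat.card_Icc] at this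
    have hlt := (c ((gsel x)⁻¹ • x)).isLt
    omega
  have hlt : ∀ x : E, min (c ((gsel x)⁻¹ • x)).val d < d + 1 :=
    fun x => Nat.lt_succ_of_le (min_le_right _ _)
  set ℓ : E → Fin (d + 1) × G :=
    fun v => (⟨min (c ((gsel v)⁻¹ • v)).val d, hlt v⟩, gsel v) with hℓ
  -- equivariance of gsel
  have hre : ∀ (k g : G) (x : E), (k * g)⁻¹ • (k • x) = g⁻¹ • x := by
    intro k g x
    rw [smul_smul, mul_inv_rev, inv_mul_cancel_right]
  have hgsmul : ∀ {x : E}, {x} ∈ T.faces → ∀ k : G, gsel (k • x) = k * gsel x := by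
    intro x hx k
    have h1 : c ((gsel (k • x))⁻¹ • (k • x)) ≤ c ((k * gsel x)⁻¹ • (k • x)) :=
      hgsel (k • x) _
    have h2 : c ((gsel x)⁻¹ • x) ≤ c ((gsel (k • x))⁻¹ • (k • x)) := by
      have h3 := hgsel x (k⁻¹ * gsel (k • x))
      have h4 : (k⁻¹ * gsel (k • x))⁻¹ • x = (gsel (k • x))⁻¹ • (k • x) := by
        rw [mul_inv_rev, inv_inv, mul_smul]
      rwa [h4] at h3
    have heq : c ((gsel (k • x))⁻¹ • (k • x)) = c ((k * gsel x)⁻¹ • (k • x)) := by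
      refine le_antisymm h1 ?_
      rw [hre k (gsel x) x]
      exact h2
    by_contra hne'
    exact hadj (k • x) (hvsmul k hx) _ _ hne' heq
  have hℓsmul : ∀ {u : E}, {u} ∈ T.faces → ∀ k : G,
      ℓ (k • u) = ((ℓ u).1, k * (ℓ u).2) := by
    intro u hu k
    have h2 := hgsmul hu k
    have h1 : c ((gsel (k • u))⁻¹ • (k • u)) = c ((gsel u)⁻¹ • u) := by
      rw [h2, hre k (gsel u) u]
    have hval : ((c ((gsel (k • u))⁻¹ • (k • u))).val ⊓ d)
        = ((c ((gsel u)⁻¹ • u)).val ⊓ d) := by rw [h1]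
    rw [hℓ]
    exact Prod.ext (Fin.ext hval) h2
  -- separation: in a common face, equal first label implies equal label
  have hsep : ∀ σ ∈ T.faces, ∀ u ∈ σ, ∀ v ∈ σ, (ℓ u).1 = (ℓ v).1 → ℓ u = ℓ v := by
    intro σ hσ u hu v hv h1
    have hu1 : {u} ∈ T.faces :=
      T.down_closed hσ (Finset.singleton_subset_iff.mpr hu) (by simp)
    have hv1 : {v} ∈ T.faces :=
      T.down_closed hσ (Finset.singleton_subset_iff.mpr hv) (by simp)
    have hiu : (c ((gsel u)⁻¹ • u)).val ≤ d := hival hu1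
    have hiv : (c ((gsel v)⁻¹ • v)).val ≤ d := hival hv1
    have hc : c ((gsel u)⁻¹ • u) = c ((gsel v)⁻¹ • v) := by
      have h2 := congrArg Fin.val h1
      rw [hℓ] at h2
      simp only at h2
      rw [min_eq_left hiu, min_eq_left hiv] at h2
      exact Fin.val_injective h2
    by_contra h2
    have hg : gsel u ≠ gsel v := by
      intro e
      exact h2 (Prod.ext h1 e)
    have hpair : ({u, v} : Finset E) ∈ T.faces := by
      refine T.down_closed hσ ?_ (by simp)
      intro z hz
      rw [Finset.mem_insert, Finset.mem_singleton] at hz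
      rcases hz with rfl | rfl
      · exact hu
      · exact hv
    have himg : ({(gsel u)⁻¹ • u, (gsel u)⁻¹ • v} : Finset E) ∈ T.faces := by
      have := hGfaces (gsel u)⁻¹ {u, v} hpair
      simpa using this
    refine hcol ((gsel u)⁻¹ • u) ((gsel v)⁻¹ • v) (hvsmul _ hu1) (hvsmul _ hv1)
      ⟨(gsel u)⁻¹ * gsel v, ?_, ?_⟩ hc
    · intro e
      exact hg (by rwa [inv_mul_eq_one] at e)
    · have h3 : ((gsel u)⁻¹ * gsel v) • ((gsel v)⁻¹ • v) = (gsel u)⁻¹ • v := by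
        rw [smul_smul, mul_assoc, mul_inv_cancel, mul_one]
      rw [h3]
      exact himg
  -- the vertex finset
  set Vfin : Finset E := hfin.toFinset.biUnion id with hVfin
  have hVmem : ∀ {v : E} {σ : Finset E}, σ ∈ T.faces → v ∈ σ → v ∈ Vfin := by
    intro v σ hσ hv
    rw [hVfin, Finset.mem_biUnion]
    exact ⟨σ, hfin.mem_toFinset.mpr hσ, hv⟩
  have hVvert : ∀ v ∈ Vfin, {v} ∈ T.faces := by
    intro v hv
    rw [hVfin, Finset.mem_biUnion] at hv
    obtain ⟨σ, hσ, hvσ⟩ := hv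
    exact T.down_closed (hfin.mem_toFinset.mp hσ)
      (Finset.singleton_subset_iff.mpr hvσ) (by simp)
  have hVsmul : ∀ (g : G), ∀ v ∈ Vfin, g • v ∈ Vfin := by
    intro g v hv
    have h1 := hvsmul g (hVvert v hv)
    exact hVmem h1 (Finset.mem_singleton_self _)
  -- hull membership from a representation
  have hull_of : ∀ (τ : Finset E) (h : E → ℝ) (y : E), (∀ v, 0 ≤ h v) →
      (∑ v ∈ τ, h v = 1) → (∑ v ∈ τ, h v • v = y) →
      y ∈ convexHull ℝ (τ : Set E) := by
    intro τ h y h0 h1 hy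
    have := Finset.centerMass_id_mem_convexHull τ (fun i _ => h0 i)
      (by rw [h1]; norm_num)
    rwa [Finset.centerMass_eq_of_sum_1 _ _ h1, show ∑ i ∈ τ, h i • id i = y from by
      simpa [id] using hy] at this
  -- choose representations
  have hex : ∀ x ∈ T.space, ∃ σf : Finset E × (E → ℝ), σf.1 ∈ T.faces ∧
      (∀ v, 0 ≤ σf.2 v) ∧ (∀ v ∉ σf.1, σf.2 v = 0) ∧
      (∑ v ∈ σf.1, σf.2 v = 1) ∧ (∑ v ∈ σf.1, σf.2 v • v = x) := by
    intro x hx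
    rw [Geometry.SimplicialComplex.mem_space_iff] at hx
    obtain ⟨σ, hσ, hxσ⟩ := hx
    rw [Finset.convexHull_eq] at hxσ
    obtain ⟨w0, hw0, hw1, hwx⟩ := hxσ
    refine ⟨(σ, fun v => if v ∈ σ then w0 v else 0), hσ, ?_, ?_, ?_, ?_⟩ <;> dsimp only
    · intro v
      by_cases hv : v ∈ σ
      · simp only [if_pos hv]; exact hw0 v hv
      · simp [if_neg hv]
    · intro v hv
      simp [if_neg hv]
    · rw [Finset.sum_congr rfl (fun v hv => if_pos hv)]
      exact hw1
    · rw [Finset.sum_congr rfl (fun v hv => by rw [if_pos hv])]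
      rw [← hwx, Finset.centerMass_eq_of_sum_1 _ _ hw1]
      simp [id]
  choose rep hrep using hex
  set w : E → E → ℝ := fun x => if hx : x ∈ T.space then (rep x hx).2 else 0 with hw
  have hwdef : ∀ (x : E) (hx : x ∈ T.space), w x = (rep x hx).2 := by
    intro x hx; rw [hw]; simp [dif_pos hx]
  -- uniqueness of representations
  have huniq : ∀ (x : E) (σ τ : Finset E) (f f' : E → ℝ), σ ∈ T.faces → τ ∈ T.faces →
      (∀ v ∉ σ, f v = 0) → (∑ v ∈ σ, f v = 1) → (∑ v ∈ σ, f v • v = x) →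
      (∀ v, 0 ≤ f v) → (∀ v ∉ τ, f' v = 0) → (∑ v ∈ τ, f' v = 1) →
      (∑ v ∈ τ, f' v • v = x) → (∀ v, 0 ≤ f' v) → f = f' := by
    intro x σ τ f f' hσ hτ hf0 hf1 hfx hfpos hf'0 hf'1 hf'x hf'pos
    have hxσ : x ∈ convexHull ℝ (σ : Set E) := hull_of σ f x hfpos hf1 hfx
    have hxτ : x ∈ convexHull ℝ (τ : Set E) := hull_of τ f' x hf'pos hf'1 hf'x
    have hxint : x ∈ convexHull ℝ ((σ ∩ τ : Finset E) : Set E) := by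
      have := T.inter_subset_convexHull hσ hτ ⟨hxσ, hxτ⟩
      rwa [← Finset.coe_inter] at this
    rw [Finset.convexHull_eq] at hxint
    obtain ⟨w0, hw00, hw01, hw0x⟩ := hxint
    set hmid : E → ℝ := fun v => if v ∈ σ ∩ τ then w0 v else 0 with hhmid
    have hmid0 : ∀ v ∉ σ ∩ τ, hmid v = 0 := by
      intro v hv
      simp only [hhmid]
      exact if_neg hv
    have hmid1 : ∑ v ∈ σ ∩ τ, hmid v = 1 := by
      have e1 : ∑ v ∈ σ ∩ τ, hmid v = ∑ v ∈ σ ∩ τ, w0 v :=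
        Finset.sum_congr rfl (fun v hv => by simp only [hhmid]; exact if_pos hv)
      rw [e1]; exact hw01
    have hmidx : ∑ v ∈ σ ∩ τ, hmid v • v = x := by
      have e1 : ∑ v ∈ σ ∩ τ, hmid v • v = ∑ v ∈ σ ∩ τ, w0 v • v :=
        Finset.sum_congr rfl (fun v hv => by simp only [hhmid]; rw [if_pos hv])
      rw [e1, ← hw0x, Finset.centerMass_eq_of_sum_1 _ _ hw01]
      simp [id]
    -- compare f with hmid over σ
    have hstep : ∀ (ρ : Finset E) (hρ : ρ ∈ T.faces) (ff : E → ℝ),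
        (σ ∩ τ) ⊆ ρ → (∀ v ∉ ρ, ff v = 0) → (∑ v ∈ ρ, ff v = 1) →
        (∑ v ∈ ρ, ff v • v = x) → ff = hmid := by
      intro ρ hρ ff hsubρ hff0 hff1 hffx
      refine bary_unique (T.indep hρ) hff0 ?_ hff1 ?_ ?_
      · intro v hv
        exact hmid0 v (fun hvm => hv (hsubρ hvm))
      · have e1 : ∑ v ∈ σ ∩ τ, hmid v = ∑ v ∈ ρ, hmid v :=
          Finset.sum_subset hsubρ (fun v _ hv => hmid0 v hv)
        rw [← e1]; exact hmid1
      · have e1 : ∑ v ∈ σ ∩ τ, hmid v • v = ∑ v ∈ ρ, hmid v • v :=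
          Finset.sum_subset hsubρ (fun v _ hv => by rw [hmid0 v hv, zero_smul])
        rw [hffx, ← e1, hmidx]
    have h1 : f = hmid := hstep σ hσ f Finset.inter_subset_left hf0 hf1 hfx
    have h2 : f' = hmid := hstep τ hτ f' Finset.inter_subset_right hf'0 hf'1 hf'x
    rw [h1, h2]
  -- basic properties of w
  have hw0 : ∀ (x : E), ∀ v, 0 ≤ w x v := by
    intro x v
    rw [hw]
    by_cases hx : x ∈ T.space
    · simp only [dif_pos hx]; exact (hrep x hx).2.1 v
    · simp [dif_neg hx]
  have hwsupp : ∀ (x : E) (hx : x ∈ T.space), ∀ v ∉ (rep x hx).1, w x v = 0 := by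
    intro x hx v hv
    rw [hwdef x hx]
    exact (hrep x hx).2.2.1 v hv
  have hwsum : ∀ (x : E) (hx : x ∈ T.space), ∑ v ∈ (rep x hx).1, w x v = 1 := by
    intro x hx
    rw [hwdef x hx]
    exact (hrep x hx).2.2.2.1
  have hwvec : ∀ (x : E) (hx : x ∈ T.space), ∑ v ∈ (rep x hx).1, w x v • v = x := by
    intro x hx
    rw [hwdef x hx]
    exact (hrep x hx).2.2.2.2
  -- continuity of the weights
  choose B hBc hBp using fun (σ : Finset E) (hσ : σ ∈ T.faces) =>
    coords_exist σ (T.indep hσ)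
  have hwB : ∀ (σ : Finset E) (hσ : σ ∈ T.faces), ∀ x ∈ convexHull ℝ (σ : Set E),
      w x = fun v => B σ hσ x v := by
    intro σ hσ x hxσ
    have hx : x ∈ T.space := Geometry.SimplicialComplex.convexHull_subset_space hσ hxσ
    obtain ⟨hB0, hBsupp, hBsum, hBvec⟩ := hBp σ hσ x hxσ
    exact huniq x (rep x hx).1 σ (w x) (fun v => B σ hσ x v) (hrep x hx).1 hσ
      (hwsupp x hx) (hwsum x hx) (hwvec x hx) (hw0 x)
      hBsupp hBsum hBvec hB0
  have hwcont : ∀ v, ContinuousOn (fun x => w x v) T.space := by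
    intro v
    have hCWA : ∀ (σ : Finset E), σ ∈ T.faces → ∀ x : E,
        ContinuousWithinAt (fun y => w y v) (convexHull ℝ (σ : Set E)) x := by
      intro σ hσ x
      by_cases hxσ : x ∈ convexHull ℝ (σ : Set E)
      · have h1 : ContinuousWithinAt (fun y => B σ hσ y v) (convexHull ℝ (σ : Set E)) x :=
          (hBc σ hσ v) x hxσ
        refine h1.congr ?_ ?_
        · intro y hy
          exact congrFun (hwB σ hσ y hy) v
        · exact congrFun (hwB σ hσ x hxσ) v
      · apply continuousWithinAt_of_notMem_closure
        rwa [IsClosed.closure_eq ((σ.finite_toSet.isCompact_convexHull (𝕜 := ℝ)).isClosed)]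
    have hsp : T.space = ⋃ σ ∈ hfin.toFinset, convexHull ℝ ((σ : Finset E) : Set E) := by
      ext y
      rw [Geometry.SimplicialComplex.mem_space_iff]
      simp only [Set.mem_iUnion, Set.Finite.mem_toFinset]
      constructor
      · rintro ⟨σ, hσ, hy⟩; exact ⟨σ, hσ, hy⟩
      · rintro ⟨σ, hσ, hy⟩; exact ⟨σ, hσ, hy⟩
    rw [hsp]
    have hind : ∀ S : Finset (Finset E), (∀ σ ∈ S, σ ∈ T.faces) → ∀ x : E,
        ContinuousWithinAt (fun y => w y v)
          (⋃ σ ∈ S, convexHull ℝ ((σ : Finset E) : Set E)) x := by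
      intro S
      induction S using Finset.induction_on with
      | empty =>
        intro _ x
        simp only [Finset.notMem_empty, Set.iUnion_of_empty, Set.iUnion_empty]
        apply continuousWithinAt_of_notMem_closure
        simp
      | @insert τ S hτS ih =>
        intro hS x
        rw [Finset.set_biUnion_insert]
        exact (hCWA τ (hS τ (Finset.mem_insert_self _ _)) x).union
          (ih (fun σ hσ => hS σ (Finset.mem_insert_of_mem hσ)) x)
    intro x _
    exact hind hfin.toFinset (fun σ hσ => hfin.mem_toFinset.mp hσ) x
  -- equivariance of the weights
  have hsumsmul : ∀ (g : G) (τ : Finset E) (f : E → ℝ),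
      ∑ u ∈ τ, f u • (g • u) = g • (∑ u ∈ τ, f u • u) := by
    intro g τ f
    rw [Finset.smul_sum]
    exact Finset.sum_congr rfl fun u _ => (smul_comm g (f u) u).symm
  have hre1 : ∀ (g : G) (τ : Finset E) (f : E → ℝ),
      ∑ v ∈ τ.image (fun u => g • u), f v = ∑ u ∈ τ, f (g • u) := by
    intro g τ f
    rw [Finset.sum_image (fun a _ b _ h => MulAction.injective g h)]
  have hre2 : ∀ (g : G) (τ : Finset E) (f : E → E),
      ∑ v ∈ τ.image (fun u => g • u), f v = ∑ u ∈ τ, f (g • u) := by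
    intro g τ f
    rw [Finset.sum_image (fun a _ b _ h => MulAction.injective g h)]
  have hspsmul : ∀ (g : G) (x : E), x ∈ T.space → g • x ∈ T.space := by
    intro g x hx
    have hσ := (hrep x hx).1
    refine Geometry.SimplicialComplex.mem_space_iff.mpr
      ⟨(rep x hx).1.image (fun u => g • u), hGfaces g _ hσ, ?_⟩
    refine hull_of _ (fun v => w x (g⁻¹ • v)) _ (fun v => hw0 x _) ?_ ?_
    · calc ∑ v ∈ (rep x hx).1.image (fun u => g • u), w x (g⁻¹ • v)
          = ∑ u ∈ (rep x hx).1, w x (g⁻¹ • (g • u)) :=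
            hre1 g _ (fun v => w x (g⁻¹ • v))
        _ = ∑ u ∈ (rep x hx).1, w x u :=
            Finset.sum_congr rfl (fun u _ => by rw [inv_smul_smul])
        _ = 1 := hwsum x hx
    · calc ∑ v ∈ (rep x hx).1.image (fun u => g • u), w x (g⁻¹ • v) • v
          = ∑ u ∈ (rep x hx).1, w x (g⁻¹ • (g • u)) • (g • u) :=
            hre2 g _ (fun v => w x (g⁻¹ • v) • v)
        _ = ∑ u ∈ (rep x hx).1, w x u • (g • u) :=
            Finset.sum_congr rfl (fun u _ => by rw [inv_smul_smul])
        _ = g • x := by rw [hsumsmul g _ (w x), hwvec x hx]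
  have hwsmul : ∀ (g : G) (x : E), x ∈ T.space → ∀ v, w (g • x) v = w x (g⁻¹ • v) := by
    intro g x hx v
    have hgx : g • x ∈ T.space := hspsmul g x hx
    have hσ' : (rep x hx).1.image (fun u => g • u) ∈ T.faces := hGfaces g _ (hrep x hx).1
    have hkey : w (g • x) = fun v => w x (g⁻¹ • v) := by
      refine huniq (g • x) (rep (g • x) hgx).1 ((rep x hx).1.image (fun u => g • u))
        (w (g • x)) (fun v => w x (g⁻¹ • v)) (hrep (g • x) hgx).1 hσ'
        (hwsupp (g • x) hgx) (hwsum (g • x) hgx) (hwvec (g • x) hgx) (hw0 (g • x))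
        ?_ ?_ ?_ (fun v => hw0 x _)
      · intro u hu
        apply hwsupp x hx
        intro hmem
        exact hu (Finset.mem_image.mpr ⟨g⁻¹ • u, hmem, by rw [smul_inv_smul]⟩)
      · calc ∑ v ∈ (rep x hx).1.image (fun u => g • u), w x (g⁻¹ • v)
            = ∑ u ∈ (rep x hx).1, w x (g⁻¹ • (g • u)) :=
              hre1 g _ (fun v => w x (g⁻¹ • v))
          _ = ∑ u ∈ (rep x hx).1, w x u :=
              Finset.sum_congr rfl (fun u _ => by rw [inv_smul_smul])
          _ = 1 := hwsum x hx
      · calc ∑ v ∈ (rep x hx).1.image (fun u => g • u), w x (g⁻¹ • v) • v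
            = ∑ u ∈ (rep x hx).1, w x (g⁻¹ • (g • u)) • (g • u) :=
              hre2 g _ (fun v => w x (g⁻¹ • v) • v)
          _ = ∑ u ∈ (rep x hx).1, w x u • (g • u) :=
              Finset.sum_congr rfl (fun u _ => by rw [inv_smul_smul])
          _ = g • x := by rw [hsumsmul g _ (w x), hwvec x hx]
    exact congrFun hkey v
  -- the map Φ
  set Φ : E → (Fin (d + 1) × G → ℝ) :=
    fun x p => ∑ v ∈ Vfin, if ℓ v = p then w x v else 0 with hΦ
  have hrepsub : ∀ (x : E) (hx : x ∈ T.space), (rep x hx).1 ⊆ Vfin :=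
    fun x hx v hv => hVmem (hrep x hx).1 hv
  have hΦsupp : ∀ (x : E) (hx : x ∈ T.space) (p : Fin (d + 1) × G),
      Φ x p ≠ 0 → ∃ v ∈ (rep x hx).1, ℓ v = p := by
    intro x hx p hp
    rw [hΦ] at hp
    obtain ⟨v, hvV, hv⟩ := Finset.exists_ne_zero_of_sum_ne_zero hp
    by_cases hℓv : ℓ v = p
    · refine ⟨v, ?_, hℓv⟩
      by_contra hvm
      rw [if_pos hℓv] at hv
      exact hv (hwsupp x hx v hvm)
    · rw [if_neg hℓv] at hv
      exact absurd rfl hv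
  refine ⟨hcard, Φ, ?_, ?_, ?_⟩
  · -- continuity
    rw [continuousOn_pi]
    intro p
    apply continuousOn_finset_sum
    intro v _
    by_cases hℓv : ℓ v = p
    · simp only [if_pos hℓv]
      exact hwcont v
    · simp only [if_neg hℓv]
      exact continuousOn_const
  · -- membership in EJoin
    intro x hx
    refine ⟨?_, ?_, ?_⟩
    · intro p
      rw [hΦ]
      exact Finset.sum_nonneg fun v _ => by
        by_cases hℓv : ℓ v = p
        · rw [if_pos hℓv]; exact hw0 x v
        · rw [if_neg hℓv]
    · calc ∑ p : Fin (d + 1) × G, Φ x p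
          = ∑ v ∈ Vfin, ∑ p : Fin (d + 1) × G, (if ℓ v = p then w x v else 0) :=
            Finset.sum_comm
        _ = ∑ v ∈ Vfin, w x v := by
            refine Finset.sum_congr rfl fun v _ => ?_
            rw [Finset.sum_ite_eq Finset.univ (ℓ v) (fun _ => w x v),
              if_pos (Finset.mem_univ _)]
        _ = 1 := by
            rw [← Finset.sum_subset (hrepsub x hx) (fun v _ hv => hwsupp x hx v hv)]
            exact hwsum x hx
    · intro i g hg g' hg'
      simp only [Set.mem_setOf_eq] at hg hg'
      obtain ⟨v, hvσ, hv⟩ := hΦsupp x hx (i, g) hg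
      obtain ⟨v', hv'σ, hv'⟩ := hΦsupp x hx (i, g') hg'
      have h1 : (ℓ v).1 = (ℓ v').1 := by rw [hv, hv']
      have h2 := hsep (rep x hx).1 (hrep x hx).1 v hvσ v' hv'σ h1
      rw [hv, hv'] at h2
      exact (Prod.mk.injEq _ _ _ _).mp h2 |>.2
  · -- equivariance
    intro g x hx
    funext p
    have himg : Finset.image (fun u => g • u) Vfin = Vfin := by
      apply Finset.Subset.antisymm
      · intro v hv
        rw [Finset.mem_image] at hv
        obtain ⟨u, hu, rfl⟩ := hv
        exact hVsmul g u hu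
      · intro v hv
        exact Finset.mem_image.mpr ⟨g⁻¹ • v, hVsmul g⁻¹ v hv, by rw [smul_inv_smul]⟩
    calc Φ (g • x) p
        = ∑ v ∈ Vfin, (fun v => if ℓ v = p then w (g • x) v else 0) v := rfl
      _ = ∑ v ∈ Vfin.image (fun u => g • u),
            (fun v => if ℓ v = p then w (g • x) v else 0) v := by rw [himg]
      _ = ∑ u ∈ Vfin, (if ℓ (g • u) = p then w (g • x) (g • u) else 0) :=
          Finset.sum_image (fun a _ b _ h => MulAction.injective g h)
      _ = ∑ u ∈ Vfin, (if ℓ u = (p.1, g⁻¹ * p.2) then w x u else 0) := by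
          refine Finset.sum_congr rfl fun u hu => ?_
          have hvert := hVvert u hu
          have he1 : ℓ (g • u) = ((ℓ u).1, g * (ℓ u).2) := hℓsmul hvert g
          have he2 : w (g • x) (g • u) = w x u := by
            rw [hwsmul g x hx, inv_smul_smul]
          have hiff : (((ℓ u).1, g * (ℓ u).2) = p) ↔ (ℓ u = (p.1, g⁻¹ * p.2)) := by
            constructor
            · intro h
              have h1 : (ℓ u).1 = p.1 := by rw [← h]
              have h2 : g * (ℓ u).2 = p.2 := by rw [← h]
              refine Prod.ext h1 ?_
              rw [← h2, inv_mul_cancel_left]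
            · intro h
              have h1 : (ℓ u).1 = p.1 := by rw [h]
              have h2 : (ℓ u).2 = g⁻¹ * p.2 := by rw [h]
              refine Prod.ext h1 ?_
              show g * (ℓ u).2 = p.2
              rw [h2, mul_inv_cancel_left]
          rw [he1, he2]
          simp only [hiff]
      _ = Φ x (p.1, g⁻¹ * p.2) := rfl
end
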